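/- arXiv:2006.10002 — 5 statements merged into one kernel-verified Lean document; each statement's English description precedes it below -/
import Mathlib

section
/- Refined elasticity equality via spanning tree packing: Let G = (V,E,r) be a graph with V nonempty and let k ≥ 2. There exists an element a ∈ A(G) that can be written both as a sum of k atoms and as a sum of (k − 1)·|V| + 1 atoms if and only if G contains k pairwise edge-disjoint spanning trees, i.e., there exist pairwise disjoint subsets E₁, …, E_k ⊆ E such that for each i one has |E_i| = |V| − 1 and any two vertices of V are joined by a walk using only edges in E_i. -/
/-- An agglomeration on the graph given by `r : E → Sym2 V`. -/
def IsAgg {V E : Type*} (r : E → Sym2 V) (a : (V → ℕ) × (E → ℕ)) : Prop :=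
  ∀ (e : E) (v : V), v ∈ r e → a.2 e ≤ a.1 v

/-- An atom of the monoid of agglomerations. -/
def IsAtomAgg {V E : Type*} (r : E → Sym2 V) (a : (V → ℕ) × (E → ℕ)) : Prop :=
  IsAgg r a ∧ a ≠ 0 ∧
    ∀ b c : (V → ℕ) × (E → ℕ), IsAgg r b → IsAgg r c → a = b + c → b = 0 ∨ c = 0

/-- `AggJoined r E' x y`: `x` and `y` are joined by a walk using only edges in `E'`. -/
def AggJoined {V E : Type*} (r : E → Sym2 V) (E' : Set E) : V → V → Prop :=
  Relation.ReflTransGen (fun x y => ∃ e ∈ E', r e = s(x, y))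

/-!
The atoms of `A(G)` are exactly the indicator vectors of connected subgraphs `(S, F)`. Write
`c(F)` for the number of components of `(V, F)`. Adding a connected subgraph on `S` to an edge
set merges at most `|S|` components, so `m` connected subgraphs with edge union `U` satisfy
`|V| + m ≤ c(U) + Σ |S_j|`, strictly if two of them share an edge; on the other hand a connected
subgraph of `(V, U)` has at most `|V| - c(U) + 1` vertices. If `a = Σ_{i<k} b_i = Σ_{j<M} c_j`
with `M = (k-1)|V| + 1`, the first bound for the `c_j` against the second for the `b_i` forces
`c(U) = 1`, every `b_i` to span `V`, and no edge to be counted twice; so the edge sets of the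
`b_i` are `k` disjoint connected spanning edge sets, and each contains a spanning tree.
Conversely, for `k` disjoint spanning trees `E_i`, the agglomeration `Σ (1, 1_{E_i})` is also
`(1, 1_{⋃ E_i})` plus `(k-1)|V|` single-vertex atoms.
-/

open scoped Finset

namespace AggJoined

variable {V E : Type*} {r : E → Sym2 V} {F F' : Set E} {x y z : V}

lemma mono (hFF' : F ⊆ F') (h : AggJoined r F x y) : AggJoined r F' x y :=
  Relation.ReflTransGen.mono (fun _ _ ⟨e, he, hre⟩ => ⟨e, hFF' he, hre⟩) _ _ h

lemma of_mem {e : E} (he : e ∈ F) (hx : x ∈ r e) (hy : y ∈ r e) : AggJoined r F x y := by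
  induction h : r e using Sym2.ind with
  | _ u w =>
    rw [h, Sym2.mem_iff] at hx hy
    have huw : AggJoined r F u w := .single ⟨e, he, h⟩
    have hwu : AggJoined r F w u := .single ⟨e, he, h.trans Sym2.eq_swap⟩
    rcases hx with rfl | rfl <;> rcases hy with rfl | rfl
    exacts [.refl, huw, hwu, .refl]

lemma trans (hxy : AggJoined r F x y) (hyz : AggJoined r F y z) : AggJoined r F x z :=
  Relation.ReflTransGen.trans hxy hyz

lemma eq_of_empty (h : AggJoined r (∅ : Set E) x y) : x = y := by
  induction h with
  | refl => rfl
  | tail _ hstep => obtain ⟨e, he, -⟩ := hstep; exact absurd he (Set.notMem_empty e)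

lemma exists_crossing (P : V → Prop) (h : AggJoined r F x y) (hx : P x) (hy : ¬ P y) :
    ∃ e ∈ F, ∃ u w, r e = s(u, w) ∧ P u ∧ ¬ P w := by
  induction h with
  | refl => exact absurd hx hy
  | @tail b c _ hstep ih =>
    obtain ⟨e, he, hre⟩ := hstep
    by_cases hb : P b
    · exact ⟨e, he, b, c, hre, hb, hy⟩
    · exact ih hb

lemma of_union_left_or {F₀ W : Set E} {A : Set V} (hF₀ : ∀ e ∈ F₀, ∀ v ∈ r e, v ∈ A)
    (h : AggJoined r (F₀ ∪ W) x y) : AggJoined r W x y ∨ ∃ a ∈ A, AggJoined r W x a := by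
  induction h with
  | refl => exact .inl .refl
  | @tail b c _ hstep ih =>
    obtain ⟨e, he | he, hre⟩ := hstep
    · exact .inr (ih.elim (fun hxb => ⟨b, hF₀ e he b (by simp [hre]), hxb⟩) id)
    · exact ih.imp (fun hxb => hxb.tail ⟨e, he, hre⟩) id

end AggJoined

section Graph

variable {V E : Type*} (r : E → Sym2 V)

/-- Parallel edges collapse and loops disappear; neither affects which vertices are joined. -/
def aggGraph (F : Set E) : SimpleGraph V := SimpleGraph.fromEdgeSet (r '' F)

variable {r}

lemma aggJoined_iff_reachable {F : Set E} {x y : V} :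
    AggJoined r F x y ↔ (aggGraph r F).Reachable x y := by
  rw [SimpleGraph.reachable_iff_reflTransGen]
  constructor
  · intro h
    induction h with
    | refl => exact .refl
    | @tail b c _ hstep ih =>
      obtain ⟨e, he, hre⟩ := hstep
      by_cases hbc : b = c
      · exact hbc ▸ ih
      · exact ih.tail ((SimpleGraph.fromEdgeSet_adj _).2 ⟨⟨e, he, hre⟩, hbc⟩)
  · exact Relation.ReflTransGen.mono
      (fun _ _ hadj => ((SimpleGraph.fromEdgeSet_adj _).1 hadj).1) _ _

lemma connectedComponentMk_eq_iff {F : Set E} {x y : V} :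
    (aggGraph r F).connectedComponentMk x = (aggGraph r F).connectedComponentMk y ↔
      AggJoined r F x y :=
  SimpleGraph.ConnectedComponent.eq.trans aggJoined_iff_reachable.symm

lemma exists_spanning_tree_subset [Fintype V] [Nonempty V] {F : Set E}
    (hF : ∀ x y, AggJoined r F x y) :
    ∃ T ⊆ F, Nat.card T + 1 = Fintype.card V ∧ ∀ x y, AggJoined r T x y := by
  classical
  have hconn : (aggGraph r F).Connected := ⟨fun x y => aggJoined_iff_reachable.1 (hF x y)⟩
  obtain ⟨G, hGle, hG⟩ := hconn.exists_isTree_le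
  -- lift the edges of a spanning tree of `aggGraph r F` back to `F`
  have hlift : ∀ d : G.edgeSet, ∃ e ∈ F, r e = d := fun d => by
    have hd := SimpleGraph.edgeSet_mono hGle d.2
    rw [aggGraph, SimpleGraph.edgeSet_fromEdgeSet] at hd
    exact hd.1
  choose f hfF hfr using hlift
  have hf : Function.Injective f := fun d d' h => Subtype.ext ((hfr d).symm.trans (h ▸ hfr d'))
  refine ⟨Set.range f, Set.range_subset_iff.2 hfF, ?_, fun x y => ?_⟩
  · rw [Nat.card_range_of_injective hf, Nat.card_eq_fintype_card, ← hG.card_edgeFinset,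
      SimpleGraph.edgeFinset, Set.toFinset_card]
  · refine Relation.ReflTransGen.mono (fun u w hadj => ?_) _ _
      ((SimpleGraph.reachable_iff_reflTransGen x y).1 (hG.connected x y))
    exact ⟨f ⟨s(u, w), hadj⟩, Set.mem_range_self _, hfr _⟩

end Graph

structure IsConnectedSubgraph {V E : Type*} (r : E → Sym2 V) (S : Finset V) (F : Set E) :
    Prop where
  nonempty : S.Nonempty
  mem_of_mem_edge : ∀ e ∈ F, ∀ v ∈ r e, v ∈ S
  joined : ∀ x ∈ S, ∀ y ∈ S, AggJoined r F x y

namespace IsConnectedSubgraph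

variable {V E : Type*} {r : E → Sym2 V}

lemma univ [Fintype V] [Nonempty V] {F : Set E} (hF : ∀ x y, AggJoined r F x y) :
    IsConnectedSubgraph r Finset.univ F :=
  ⟨Finset.univ_nonempty, fun _ _ _ _ => Finset.mem_univ _, fun x _ y _ => hF x y⟩

lemma singleton (v : V) : IsConnectedSubgraph r {v} (∅ : Set E) :=
  ⟨Finset.singleton_nonempty v, fun _ he => absurd he (Set.notMem_empty _), fun x hx y hy => by
    rw [Finset.mem_singleton.1 hx, Finset.mem_singleton.1 hy]; exact .refl⟩

end IsConnectedSubgraph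

section Components

variable {V E : Type*} [Fintype V] (r : E → Sym2 V)

noncomputable def numComponents (F : Set E) : ℕ := Nat.card (aggGraph r F).ConnectedComponent

variable {r}

lemma numComponents_empty : numComponents r (∅ : Set E) = Fintype.card V := by
  rw [numComponents, ← Nat.card_eq_fintype_card]
  refine (Nat.card_eq_of_bijective _ ⟨fun x y h => ?_, SimpleGraph.ConnectedComponent.ind
    fun v => ⟨v, rfl⟩⟩).symm
  exact (connectedComponentMk_eq_iff.1 h).eq_of_empty

lemma one_le_numComponents [Nonempty V] (F : Set E) : 1 ≤ numComponents r F :=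
  Nat.card_pos

lemma numComponents_add_card_le {U : Set E} {S : Finset V}
    (hS : ∀ x ∈ S, ∀ y ∈ S, AggJoined r U x y) :
    numComponents r U + #S ≤ Fintype.card V + 1 := by
  classical
  set mk := (aggGraph r U).connectedComponentMk
  have hsurj : Finset.univ.image mk = Finset.univ :=
    Finset.image_univ_of_surjective fun K => K.ind fun v => ⟨v, rfl⟩
  have hSmk : #(S.image mk) ≤ 1 := Finset.card_le_one.2 fun K hK K' hK' => by
    obtain ⟨x, hx, rfl⟩ := Finset.mem_image.1 hK
    obtain ⟨y, hy, rfl⟩ := Finset.mem_image.1 hK'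
    exact connectedComponentMk_eq_iff.2 (hS x hx y hy)
  have hcard : numComponents r U ≤ #Sᶜ + 1 := calc
    numComponents r U = #((Sᶜ ∪ S).image mk) := by
      rw [Finset.union_comm, Finset.union_compl, hsurj, Finset.card_univ, numComponents,
        Nat.card_eq_fintype_card]
    _ ≤ #(Sᶜ.image mk) + #(S.image mk) := by
      rw [Finset.image_union]; exact Finset.card_union_le _ _
    _ ≤ #Sᶜ + 1 := add_le_add Finset.card_image_le hSmk
  have := Finset.card_compl_add_card S
  omega

open Classical in
lemma numComponents_add_one_le {F₀ W : Set E} {A : Finset V}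
    (hA : IsConnectedSubgraph r A F₀) :
    numComponents r W + 1 ≤
      numComponents r (F₀ ∪ W) + #(A.image (aggGraph r W).connectedComponentMk) := by
  set mk := (aggGraph r W).connectedComponentMk
  set mk' := (aggGraph r (F₀ ∪ W)).connectedComponentMk
  set B := A.image mk
  have hle : aggGraph r W ≤ aggGraph r (F₀ ∪ W) :=
    SimpleGraph.fromEdgeSet_mono (Set.image_mono Set.subset_union_right)
  set π := SimpleGraph.ConnectedComponent.map (SimpleGraph.Hom.ofLE hle)
  obtain ⟨a₀, ha₀⟩ := hA.nonempty
  -- Components of `W` away from `A` survive in `F₀ ∪ W`; none of them is the component of `A`.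
  have outside (v w : V) (hv : mk v ∉ B) (hvw : mk' v = mk' w) : AggJoined r W v w := by
    refine ((connectedComponentMk_eq_iff.1 hvw).of_union_left_or
      hA.mem_of_mem_edge).resolve_right ?_
    rintro ⟨a, ha, hva⟩
    exact hv (Finset.mem_image.2 ⟨a, ha, (connectedComponentMk_eq_iff.2 hva).symm⟩)
  have hinj : Set.InjOn π ↑Bᶜ := by
    intro K hK K' _ h
    induction K using SimpleGraph.ConnectedComponent.ind
    induction K' using SimpleGraph.ConnectedComponent.ind
    exact connectedComponentMk_eq_iff.2 (outside _ _ (Finset.mem_compl.1 hK) h)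
  have hfresh : mk' a₀ ∉ Bᶜ.image π := by
    simp only [Finset.mem_image, Finset.mem_compl, not_exists, not_and]
    intro K hK h
    induction K using SimpleGraph.ConnectedComponent.ind with | _ v => ?_
    exact hK (Finset.mem_image.2
      ⟨a₀, ha₀, (connectedComponentMk_eq_iff.2 (outside v a₀ hK h)).symm⟩)
  have hcard : #Bᶜ + 1 ≤ numComponents r (F₀ ∪ W) := calc
    #Bᶜ + 1 = #(insert (mk' a₀) (Bᶜ.image π)) := by
      rw [Finset.card_insert_of_notMem hfresh, Finset.card_image_of_injOn hinj]
    _ ≤ numComponents r (F₀ ∪ W) := by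
      rw [numComponents, Nat.card_eq_fintype_card]; exact Finset.card_le_univ _
  have hB := Finset.card_compl_add_card B
  rw [numComponents, Nat.card_eq_fintype_card]
  omega

end Components

section Families

variable {V E ι : Type*} [Fintype V] {r : E → Sym2 V}
  {S : ι → Finset V} {F : ι → Set E}

lemma card_add_card_le_numComponents_add_sum {J : Finset ι}
    (hJ : ∀ j ∈ J, IsConnectedSubgraph r (S j) (F j)) :
    Fintype.card V + #J ≤ numComponents r (⋃ j ∈ J, F j) + ∑ j ∈ J, #(S j) := by
  classical
  induction J using Finset.induction with
  | empty => simp [numComponents_empty]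
  | @insert j J hj ih =>
    have hstep := numComponents_add_one_le (W := ⋃ j ∈ J, F j) (hJ j (J.mem_insert_self j))
    have := ih fun j' hj' => hJ j' (Finset.mem_insert_of_mem hj')
    rw [Finset.set_biUnion_insert, Finset.sum_insert hj, Finset.card_insert_of_notMem hj]
    have := Finset.card_image_le (s := S j)
      (f := (aggGraph r (⋃ j ∈ J, F j)).connectedComponentMk)
    omega

lemma card_add_card_lt_numComponents_add_sum {J : Finset ι}
    (hJ : ∀ j ∈ J, IsConnectedSubgraph r (S j) (F j)) {j₁ j₂ : ι} (hj₁ : j₁ ∈ J) (hj₂ : j₂ ∈ J)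
    (hne : j₁ ≠ j₂) {e : E} (he : ¬ (r e).IsDiag) (he₁ : e ∈ F j₁) (he₂ : e ∈ F j₂) :
    Fintype.card V + #J < numComponents r (⋃ j ∈ J, F j) + ∑ j ∈ J, #(S j) := by
  classical
  set W := ⋃ j ∈ J.erase j₂, F j with hW
  have hbound := card_add_card_le_numComponents_add_sum (J := J.erase j₂)
    fun j hj => hJ j (Finset.mem_of_mem_erase hj)
  have hstep := numComponents_add_one_le (W := W) (hJ j₂ hj₂)
  -- both ends of `e` lie in `S j₂` and are already joined in `W` through `e ∈ F j₁`
  have hlt : #((S j₂).image (aggGraph r W).connectedComponentMk) < #(S j₂) := by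
    induction h : r e using Sym2.ind with
    | _ x y =>
      rw [h, Sym2.mk_isDiag_iff] at he
      have hmem (v : V) (hv : v ∈ r e) : v ∈ S j₂ := (hJ j₂ hj₂).mem_of_mem_edge e he₂ v hv
      have heW : e ∈ W := Set.mem_biUnion (Finset.mem_erase.2 ⟨hne, hj₁⟩) he₁
      refine lt_of_le_of_ne Finset.card_image_le fun hcard => he ?_
      refine Finset.card_image_iff.1 hcard (hmem x (by simp [h])) (hmem y (by simp [h])) ?_
      exact connectedComponentMk_eq_iff.2 (.of_mem heW (by simp [h]) (by simp [h]))
  have hJ₂ : J = insert j₂ (J.erase j₂) := (Finset.insert_erase hj₂).symm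
  rw [hJ₂, Finset.set_biUnion_insert, Finset.sum_insert (Finset.notMem_erase j₂ J),
    Finset.card_insert_of_notMem (Finset.notMem_erase j₂ J), ← hW]
  rw [← hW] at hbound
  omega

end Families

section Atoms

variable {V E : Type*} {r : E → Sym2 V}

noncomputable def aggInd (S : Finset V) (F : Set E) : (V → ℕ) × (E → ℕ) :=
  ((S : Set V).indicator 1, F.indicator 1)

lemma isAgg_aggInd {S : Finset V} {F : Set E} (h : ∀ e ∈ F, ∀ v ∈ r e, v ∈ S) :
    IsAgg r (aggInd S F) := by
  classical
  intro e v hv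
  by_cases he : e ∈ F
  · simp [aggInd, he, h e he v hv]
  · simp [aggInd, he]

lemma isAgg_sum {ι : Type*} (s : Finset ι) {b : ι → (V → ℕ) × (E → ℕ)}
    (h : ∀ i ∈ s, IsAgg r (b i)) : IsAgg r (∑ i ∈ s, b i) := fun e v hv => by
  simp only [Prod.fst_sum, Prod.snd_sum, Finset.sum_apply]
  exact Finset.sum_le_sum fun i hi => h i hi e v hv

lemma IsAgg.exists_fst_ne_zero {a : (V → ℕ) × (E → ℕ)} (ha : IsAgg r a) (hne : a ≠ 0) :
    ∃ v, a.1 v ≠ 0 := by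
  by_contra! h
  refine hne (Prod.ext (funext h) (funext fun e => ?_))
  induction hre : r e using Sym2.ind with
  | _ v w => simpa [h v] using ha e v (by simp [hre])

lemma IsAtomAgg.eq_of_le {a b : (V → ℕ) × (E → ℕ)} (ha : IsAtomAgg r a) (hb : IsAgg r b)
    (hab : IsAgg r (a - b)) (hle : b ≤ a) (hb0 : b ≠ 0) : b = a := by
  rcases ha.2.2 b (a - b) hb hab (add_tsub_cancel_of_le hle).symm with h | h
  · exact absurd h hb0
  · exact le_antisymm hle (tsub_eq_zero_iff_le.1 h)

lemma aggInd_fst_apply (S : Finset V) (F : Set E) (v : V) [Decidable (v ∈ S)] :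
    (aggInd S F).1 v = if v ∈ S then 1 else 0 := by
  simp [aggInd, Set.indicator_apply]

lemma aggInd_snd_apply (S : Finset V) (F : Set E) (e : E) [Decidable (e ∈ F)] :
    (aggInd S F).2 e = if e ∈ F then 1 else 0 := by
  simp [aggInd, Set.indicator_apply]

lemma IsAtomAgg.exists_eq_aggInd [Fintype V] {a : (V → ℕ) × (E → ℕ)} (ha : IsAtomAgg r a) :
    ∃ S F, a = aggInd S F := by
  classical
  set S := Finset.univ.filter (a.1 · ≠ 0)
  set F := {e | a.2 e ≠ 0}
  have hS (v : V) : v ∈ S ↔ a.1 v ≠ 0 := by simp [S]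
  refine ⟨S, F, (ha.eq_of_le ?_ ?_ ?_ ?_).symm⟩
  · refine isAgg_aggInd fun e he v hv => (hS v).2 ?_
    have := ha.1 e v hv
    simp only [F, Set.mem_ofPred_eq] at he
    omega
  · intro e v hv
    have := ha.1 e v hv
    simp only [Prod.fst_sub, Prod.snd_sub, Pi.sub_apply, aggInd_fst_apply, aggInd_snd_apply,
      hS, F, Set.mem_ofPred_eq]
    split_ifs <;> omega
  · refine ⟨fun v => ?_, fun e => ?_⟩
    · rw [aggInd_fst_apply]; have := hS v; split_ifs <;> simp_all [Nat.one_le_iff_ne_zero]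
    · rw [aggInd_snd_apply]; split_ifs <;> simp_all [F, Nat.one_le_iff_ne_zero]
  · intro h0
    obtain ⟨v, hv⟩ := ha.1.exists_fst_ne_zero ha.2.1
    have := congrFun (congrArg Prod.fst h0) v
    rw [aggInd_fst_apply, if_pos ((hS v).2 hv)] at this
    exact one_ne_zero this

lemma aggInd_ne_zero {S : Finset V} (hS : S.Nonempty) (F : Set E) : aggInd S F ≠ 0 := by
  classical
  obtain ⟨v, hv⟩ := hS
  intro h0
  have := congrFun (congrArg Prod.fst h0) v
  rw [aggInd_fst_apply, if_pos hv] at this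
  exact one_ne_zero this

lemma aggInd_mono {S S' : Finset V} {F F' : Set E} (hS : S ⊆ S') (hF : F ⊆ F') :
    aggInd S F ≤ aggInd S' F' :=
  ⟨Set.indicator_le_indicator_of_subset (Finset.coe_subset.2 hS) fun _ => zero_le_one,
    Set.indicator_le_indicator_of_subset hF fun _ => zero_le_one⟩

lemma IsAtomAgg.isConnectedSubgraph {S : Finset V} {F : Set E}
    (ha : IsAtomAgg r (aggInd S F)) : IsConnectedSubgraph r S F := by
  classical
  have hmem (e : E) (he : e ∈ F) (v : V) (hv : v ∈ r e) : v ∈ S := by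
    by_contra hvS
    have := ha.1 e v hv
    rw [aggInd_fst_apply, aggInd_snd_apply, if_pos he, if_neg hvS] at this
    omega
  have hne : S.Nonempty := by
    obtain ⟨v, hv⟩ := ha.1.exists_fst_ne_zero ha.2.1
    rw [aggInd_fst_apply] at hv
    exact ⟨v, by_contra fun h => hv (if_neg h)⟩
  refine ⟨hne, hmem, fun x hx y hy => ?_⟩
  -- the part of `(S, F)` reachable from `x` splits off as an agglomeration
  set C := S.filter (AggJoined r F x ·)
  set FC := {e ∈ F | ∀ v ∈ r e, v ∈ C}
  have hclosed (e : E) (he : e ∈ F) (v : V) (hv : v ∈ r e) (hvC : v ∈ C) : e ∈ FC := by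
    refine ⟨he, fun w hw => Finset.mem_filter.2 ⟨hmem e he w hw, ?_⟩⟩
    exact (Finset.mem_filter.1 hvC).2.trans (.of_mem he hv hw)
  have hCS : C ⊆ S := Finset.filter_subset _ _
  have hsplit := ha.eq_of_le (b := aggInd C FC) (isAgg_aggInd fun e he => he.2) ?_ ?_
    (aggInd_ne_zero ⟨x, Finset.mem_filter.2 ⟨hx, .refl⟩⟩ FC)
  · have := congrFun (congrArg Prod.fst hsplit) y
    rw [aggInd_fst_apply, aggInd_fst_apply, if_pos hy] at this
    by_contra hxy
    rw [if_neg fun hyC => hxy (Finset.mem_filter.1 hyC).2] at this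
    exact zero_ne_one this
  · intro e v hv
    simp only [Prod.fst_sub, Prod.snd_sub, Pi.sub_apply, aggInd_fst_apply, aggInd_snd_apply]
    by_cases he : e ∈ F
    · have := hclosed e he v hv
      have := hmem e he v hv
      have := @hCS v
      split_ifs <;> simp_all
    · have : e ∉ FC := fun h => he h.1
      simp [he, this]
  · exact aggInd_mono hCS fun e he => he.1

lemma IsConnectedSubgraph.isAtomAgg {S : Finset V} {F : Set E}
    (hSF : IsConnectedSubgraph r S F) : IsAtomAgg r (aggInd S F) := by
  classical
  refine ⟨isAgg_aggInd hSF.mem_of_mem_edge, aggInd_ne_zero hSF.nonempty F,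
    fun b c hb hc hbc => ?_⟩
  have hfst (u : V) := congrFun (congrArg Prod.fst hbc) u
  have hsnd (e : E) := congrFun (congrArg Prod.snd hbc) e
  simp only [Prod.fst_add, Prod.snd_add, Pi.add_apply, aggInd_fst_apply, aggInd_snd_apply]
    at hfst hsnd
  by_contra! h0
  obtain ⟨v, hv⟩ := hb.exists_fst_ne_zero h0.1
  obtain ⟨w, hw⟩ := hc.exists_fst_ne_zero h0.2
  have hS (u : V) (hu : b.1 u + c.1 u ≠ 0) : u ∈ S := by
    by_contra h; have := hfst u; rw [if_neg h] at this; omega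
  -- a walk in `F` from the support of `b` to a vertex outside it crosses an edge of `F`
  -- that neither `b` nor `c` can carry
  obtain ⟨e, he, u, u', hre, hu, hu'⟩ :=
    (hSF.joined v (hS v (by omega)) w (hS w (by omega))).exists_crossing (b.1 · ≠ 0) hv
      (by have := hfst w; split_ifs at this <;> omega)
  have h1 := hb e u' (by simp [hre])
  have h2 := hc e u (by simp [hre])
  have h3 := hfst u
  have h4 := hsnd e
  rw [if_pos (hSF.mem_of_mem_edge e he u (by simp [hre]))] at h3
  rw [if_pos he] at h4
  omega

lemma isAtomAgg_iff [Fintype V] {a : (V → ℕ) × (E → ℕ)} :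
    IsAtomAgg r a ↔ ∃ S F, IsConnectedSubgraph r S F ∧ a = aggInd S F := by
  refine ⟨fun ha => ?_, fun ⟨S, F, hSF, ha⟩ => ha ▸ hSF.isAtomAgg⟩
  obtain ⟨S, F, rfl⟩ := ha.exists_eq_aggInd
  exact ⟨S, F, ha.isConnectedSubgraph, rfl⟩

end Atoms

section Sums

variable {V E ι : Type*} {r : E → Sym2 V}

lemma sum_aggInd_snd_apply (s : Finset ι) (S : ι → Finset V) (F : ι → Set E) (e : E)
    [DecidablePred (e ∈ F ·)] :
    (∑ i ∈ s, aggInd (S i) (F i)).2 e = #{i ∈ s | e ∈ F i} := by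
  simp [Prod.snd_sum, Finset.sum_apply, aggInd_snd_apply]

lemma sum_sum_aggInd_fst [Fintype V] (s : Finset ι) (S : ι → Finset V) (F : ι → Set E) :
    ∑ v, (∑ i ∈ s, aggInd (S i) (F i)).1 v = ∑ i ∈ s, #(S i) := by
  classical
  simp only [Prod.fst_sum, Finset.sum_apply]
  rw [Finset.sum_comm]
  simp [aggInd_fst_apply]

end Sums

section Packing

variable {V E : Type*} [Fintype V] {r : E → Sym2 V}

lemma exists_atoms_sum_eq_sum_aggInd_univ [Nonempty V] {k : ℕ} (hk : 1 ≤ k) {Es : Fin k → Set E}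
    (hdisj : ∀ i j, i ≠ j → Disjoint (Es i) (Es j)) (hEs : ∀ i x y, AggJoined r (Es i) x y) :
    ∃ c : Fin ((k - 1) * Fintype.card V + 1) → (V → ℕ) × (E → ℕ),
      (∀ j, IsAtomAgg r (c j)) ∧ ∑ i, aggInd Finset.univ (Es i) = ∑ j, c j := by
  classical
  set U := ⋃ i ∈ Finset.univ, Es i
  let atom : Option (Fin (k - 1) × V) → (V → ℕ) × (E → ℕ) :=
    fun o => o.elim (aggInd Finset.univ U) fun p => aggInd {p.2} ∅
  -- `none` indexes the spanning atom, `some (i, v)` the `i`-th copy of the atom at `v`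
  let σ : Option (Fin (k - 1) × V) ≃ Fin ((k - 1) * Fintype.card V + 1) :=
    (Equiv.optionCongr ((Equiv.prodCongr (.refl _) (Fintype.equivFin V)).trans
      finProdFinEquiv)).trans (finSuccEquiv _).symm
  have hatom : ∀ o, IsAtomAgg r (atom o)
    | none => (IsConnectedSubgraph.univ fun x y =>
        (hEs ⟨0, hk⟩ x y).mono (Set.subset_biUnion_of_mem (Finset.mem_univ _))).isAtomAgg
    | some (_, v) => (IsConnectedSubgraph.singleton v).isAtomAgg
  refine ⟨atom ∘ σ.symm, fun j => hatom _, ?_⟩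
  rw [Function.comp_def, Equiv.sum_comp σ.symm atom, Fintype.sum_option]
  refine Prod.ext (funext fun v => ?_) (funext fun e => ?_)
  · simp [atom, Prod.fst_sum, Finset.sum_apply, aggInd_fst_apply, Fintype.sum_prod_type]
    omega
  · simp only [atom, aggInd, U, Prod.snd_add, Prod.snd_sum, Finset.sum_apply, Pi.add_apply,
      Option.elim]
    rw [Finset.indicator_biUnion_apply Finset.univ Es fun i _ j _ hij => hdisj i j hij]
    simp

lemma numComponents_eq_one_and_sum_card_eq_of_sum_eq [Nonempty V] {k : ℕ} (hk : 2 ≤ k)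
    {Sb : Fin k → Finset V} {Fb : Fin k → Set E} (hb : ∀ i, IsConnectedSubgraph r (Sb i) (Fb i))
    {Sc : Fin ((k - 1) * Fintype.card V + 1) → Finset V}
    {Fc : Fin ((k - 1) * Fintype.card V + 1) → Set E}
    (hc : ∀ j, IsConnectedSubgraph r (Sc j) (Fc j))
    (hbc : ∑ i, aggInd (Sb i) (Fb i) = ∑ j, aggInd (Sc j) (Fc j)) :
    numComponents r (⋃ j ∈ Finset.univ, Fc j) = 1 ∧ ∑ j, #(Sc j) = k * Fintype.card V := by
  classical
  set q := numComponents r (⋃ j ∈ Finset.univ, Fc j)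
  have hmass : ∑ i, #(Sb i) = ∑ j, #(Sc j) := by
    rw [← sum_sum_aggInd_fst, ← sum_sum_aggInd_fst, hbc]
  have hFbU (i : Fin k) : Fb i ⊆ ⋃ j ∈ Finset.univ, Fc j := fun e he => by
    have : 0 < #{j | e ∈ Fc j} := by
      rw [← sum_aggInd_snd_apply, ← hbc, sum_aggInd_snd_apply]
      exact Finset.card_pos.2 ⟨i, by simpa using he⟩
    obtain ⟨j, hj⟩ := Finset.card_pos.1 this
    exact Set.mem_biUnion (Finset.mem_univ j) (by simpa using hj)
  have hlower : Fintype.card V + ((k - 1) * Fintype.card V + 1) ≤ q + ∑ j, #(Sc j) := by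
    have h := card_add_card_le_numComponents_add_sum (J := Finset.univ) fun j _ => hc j
    rwa [Finset.card_univ, Fintype.card_fin] at h
  have hupper (i : Fin k) : q + #(Sb i) ≤ Fintype.card V + 1 := numComponents_add_card_le
    fun x hx y hy => ((hb i).joined x hx y hy).mono (hFbU i)
  have hupper_sum : k * q + ∑ j, #(Sc j) ≤ k * (Fintype.card V + 1) := by
    rw [← hmass]
    simpa [Finset.sum_add_distrib] using
      Finset.sum_le_sum fun i (_ : i ∈ Finset.univ) => hupper i
  have hq : 1 ≤ q := one_le_numComponents _
  have hkn : (k - 1) * Fintype.card V + Fintype.card V = k * Fintype.card V := by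
    rw [← Nat.succ_mul, Nat.succ_eq_add_one, Nat.sub_add_cancel (by omega)]
  have hq1 : q = 1 := by nlinarith
  refine ⟨hq1, ?_⟩
  rw [hq1, Nat.mul_add, mul_one] at hupper_sum
  omega

lemma eq_univ_and_pairwise_disjoint_of_sum_eq [Nonempty V] (hr : ∀ e, ¬ (r e).IsDiag)
    {k : ℕ} (hk : 2 ≤ k) {Sb : Fin k → Finset V} {Fb : Fin k → Set E}
    (hb : ∀ i, IsConnectedSubgraph r (Sb i) (Fb i))
    {Sc : Fin ((k - 1) * Fintype.card V + 1) → Finset V}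
    {Fc : Fin ((k - 1) * Fintype.card V + 1) → Set E}
    (hc : ∀ j, IsConnectedSubgraph r (Sc j) (Fc j))
    (hbc : ∑ i, aggInd (Sb i) (Fb i) = ∑ j, aggInd (Sc j) (Fc j)) :
    (∀ i, Sb i = Finset.univ) ∧ ∀ i i', i ≠ i' → Disjoint (Fb i) (Fb i') := by
  classical
  obtain ⟨hq, hs⟩ := numComponents_eq_one_and_sum_card_eq_of_sum_eq hk hb hc hbc
  have hsum : ∑ i, #(Sb i) = ∑ _i : Fin k, Fintype.card V := by
    rw [← sum_sum_aggInd_fst, hbc, sum_sum_aggInd_fst, hs, Finset.sum_const, Finset.card_univ,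
      Fintype.card_fin, smul_eq_mul]
  have hSb (i : Fin k) : #(Sb i) = Fintype.card V :=
    (Finset.sum_eq_sum_iff_of_le fun i _ => Finset.card_le_univ _).1 hsum i (Finset.mem_univ i)
  refine ⟨fun i => Finset.eq_univ_of_card _ (hSb i), fun i i' hii' => Set.disjoint_left.2 ?_⟩
  -- an edge shared by two `Fb` is shared by two `Fc`, which beats the lower bound
  intro e hei hei'
  have : 1 < #{j | e ∈ Fc j} := by
    rw [← sum_aggInd_snd_apply, ← hbc, sum_aggInd_snd_apply]
    exact Finset.one_lt_card.2 ⟨i, by simpa using hei, i', by simpa using hei', hii'⟩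
  obtain ⟨j₁, hj₁, j₂, hj₂, hj⟩ := Finset.one_lt_card.1 this
  have := card_add_card_lt_numComponents_add_sum (J := Finset.univ) (fun j _ => hc j)
    (Finset.mem_univ j₁) (Finset.mem_univ j₂) hj (hr e) (by simpa using hj₁) (by simpa using hj₂)
  rw [Finset.card_univ, Fintype.card_fin, hq, hs] at this
  have hkn : (k - 1) * Fintype.card V + Fintype.card V = k * Fintype.card V := by
    rw [← Nat.succ_mul, Nat.succ_eq_add_one, Nat.sub_add_cancel (by omega)]
  omega

end Packing

theorem refined_elasticity_eq_iff_spanning_trees_general {V E : Type*} [Fintype V]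
    [Nonempty V]
    (r : E → Sym2 V) (hr : ∀ e : E, ¬ (r e).IsDiag)
    (k : ℕ) (hk : 2 ≤ k) :
    (∃ a : (V → ℕ) × (E → ℕ), IsAgg r a ∧
      (∃ b : Fin k → (V → ℕ) × (E → ℕ), (∀ i, IsAtomAgg r (b i)) ∧ a = ∑ i, b i) ∧
      (∃ c : Fin ((k - 1) * Fintype.card V + 1) → (V → ℕ) × (E → ℕ),
        (∀ i, IsAtomAgg r (c i)) ∧ a = ∑ i, c i)) ↔
    (∃ Es : Fin k → Set E,
      (∀ i j, i ≠ j → Disjoint (Es i) (Es j)) ∧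
      ∀ i, Nat.card ↥(Es i) + 1 = Fintype.card V ∧
        ∀ x y : V, AggJoined r (Es i) x y) := by
  constructor
  · rintro ⟨_, -, ⟨b, hb, rfl⟩, c, hc, hbc⟩
    choose Sb Fb hSFb hb_eq using fun i => isAtomAgg_iff.1 (hb i)
    choose Sc Fc hSFc hc_eq using fun j => isAtomAgg_iff.1 (hc j)
    simp only [hb_eq, hc_eq] at hbc
    obtain ⟨huniv, hdisj⟩ := eq_univ_and_pairwise_disjoint_of_sum_eq hr hk hSFb hSFc hbc
    choose T hTF hT using fun i => exists_spanning_tree_subset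
      fun x y => (hSFb i).joined x (huniv i ▸ Finset.mem_univ x) y (huniv i ▸ Finset.mem_univ y)
    exact ⟨T, fun i j hij => (hdisj i j hij).mono (hTF i) (hTF j), hT⟩
  · rintro ⟨Es, hdisj, hEs⟩
    have hatoms (i : Fin k) : IsAtomAgg r (aggInd Finset.univ (Es i)) :=
      (IsConnectedSubgraph.univ (hEs i).2).isAtomAgg
    obtain ⟨c, hc, hsum⟩ := exists_atoms_sum_eq_sum_aggInd_univ (by omega) hdisj fun i => (hEs i).2
    exact ⟨_, isAgg_sum _ fun i _ => (hatoms i).1, ⟨_, hatoms, rfl⟩, c, hc, hsum⟩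

/-- **Refined elasticity equality via spanning tree packing**: there is an element of
`A(G)` which is both a sum of `k` atoms and a sum of `(k−1)·|V| + 1` atoms if and only if
`G` contains `k` pairwise edge-disjoint spanning trees. -/
theorem refined_elasticity_eq_iff_spanning_trees {V E : Type*} [Fintype V] [Fintype E]
    [Nonempty V]
    (r : E → Sym2 V) (hr : ∀ e : E, ¬ (r e).IsDiag)
    (k : ℕ) (hk : 2 ≤ k) :
    (∃ a : (V → ℕ) × (E → ℕ), IsAgg r a ∧
      (∃ b : Fin k → (V → ℕ) × (E → ℕ), (∀ i, IsAtomAgg r (b i)) ∧ a = ∑ i, b i) ∧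
      (∃ c : Fin ((k - 1) * Fintype.card V + 1) → (V → ℕ) × (E → ℕ),
        (∀ i, IsAtomAgg r (c i)) ∧ a = ∑ i, c i)) ↔
    (∃ Es : Fin k → Set E,
      (∀ i j, i ≠ j → Disjoint (Es i) (Es j)) ∧
      ∀ i, Nat.card ↥(Es i) + 1 = Fintype.card V ∧
        ∀ x y : V, AggJoined r (Es i) x y) :=
  refined_elasticity_eq_iff_spanning_trees_general r hr k hk
end

section
/- Acyclic support forces a unique factorization length: Let G = (V,E,r) be a graph and let a ∈ A(G) have acyclic support, meaning that for every nonempty subset E' ⊆ E_a, the number of vertices incident with at least one edge of E' is strictly greater than |E'|. Then every factorization of a into atoms has the same length: whenever a = b₁ + ⋯ + b_l with all b_i atoms of A(G), one has l = Σ_{v ∈ V} a_V(v) − Σ_{e ∈ E} a_E(e). -/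
open Finset Function

section Agglomerations

variable {V E : Type*}

def IsAcyclicEdgeSet (r : E → Sym2 V) (F : Set E) : Prop :=
  ∀ E' ⊆ F, E'.Nonempty → Nat.card E' < Nat.card {v : V // ∃ e ∈ E', v ∈ r e}

/-- On `0/1`-valued agglomerations this is the Euler characteristic `|V_a| - |E_a|`. -/
def eulerChar (V E : Type*) [Fintype V] [Fintype E] : (V → ℕ) × (E → ℕ) →+ ℤ :=
  AddMonoidHom.mk' (fun a => ∑ v, (a.1 v : ℤ) - ∑ e, (a.2 e : ℤ)) fun a b => by
    simp only [Prod.fst_add, Prod.snd_add, Pi.add_apply, Nat.cast_add, sum_add_distrib]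
    ring

def leafAgg [DecidableEq V] [DecidableEq E] (v : V) (e : E) : (V → ℕ) × (E → ℕ) :=
  (Pi.single v 1, Pi.single e 1)

section Acyclic

variable {r : E → Sym2 V} {F : Set E}

theorem IsAcyclicEdgeSet.mono {G : Set E} (hF : IsAcyclicEdgeSet r F) (hGF : G ⊆ F) :
    IsAcyclicEdgeSet r G :=
  fun E' hE' => hF E' (hE'.trans hGF)

theorem IsAcyclicEdgeSet.exists_ne_mem [Finite V] (hF : IsAcyclicEdgeSet r F) {e : E}
    (he : e ∈ F) {v : V} (hv : v ∈ r e) : ∃ u ∈ r e, u ≠ v := by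
  have hcard := hF {e} (Set.singleton_subset_iff.2 he) (Set.singleton_nonempty e)
  rw [Nat.card_unique, Finite.one_lt_card_iff_nontrivial] at hcard
  obtain ⟨⟨u, hu⟩, huv⟩ := exists_ne (⟨v, e, rfl, hv⟩ : {w : V // ∃ f ∈ ({e} : Set E), w ∈ r f})
  obtain ⟨f, rfl, hu⟩ := hu
  exact ⟨u, hu, fun h => huv (Subtype.ext h)⟩

theorem card_filter_mem_le_two [DecidableEq V] (z : Sym2 V) (s : Finset V) :
    #(s.filter (· ∈ z)) ≤ 2 := by
  calc #(s.filter (· ∈ z)) ≤ #z.toFinset :=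
        card_le_card fun w hw => Sym2.mem_toFinset.2 (mem_filter.1 hw).2
    _ ≤ 2 := by rw [Sym2.card_toFinset]; split <;> omega

theorem IsAcyclicEdgeSet.exists_leaf [Fintype V] [Fintype E] (hF : IsAcyclicEdgeSet r F)
    (hne : F.Nonempty) : ∃ e ∈ F, ∃ v ∈ r e, ∀ f ∈ F, v ∈ r f → f = e := by
  classical
  by_contra! hnoleaf
  set edges := F.toFinset
  set verts := univ.filter fun v => ∃ e ∈ F, v ∈ r e
  have hlt : #edges < #verts := by
    have := hF F subset_rfl hne
    rwa [Nat.card_eq_card_toFinset, Nat.card_eq_fintype_card, Fintype.card_subtype] at this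
  -- every spanned vertex lies on two edges, every edge has at most two endpoints
  have hdouble : #verts * 2 ≤ #edges * 2 := by
    refine card_mul_le_card_mul (fun v e => v ∈ r e) (fun v hv => ?_) fun e _ =>
      card_filter_mem_le_two (r e) verts
    obtain ⟨e, he, hve⟩ := (mem_filter.1 hv).2
    obtain ⟨f, hf, hvf, hfe⟩ := hnoleaf e he v hve
    calc 2 = #{e, f} := (card_pair hfe.symm).symm
      _ ≤ _ := card_le_card <| by
        simp [insert_subset_iff, bipartiteAbove, edges, he, hve, hf, hvf]
  omega

end Acyclic

section Atoms

variable {r : E → Sym2 V}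

theorem IsAtomAgg.eq_zero_of_eq_add {b c d : (V → ℕ) × (E → ℕ)} (hb : IsAtomAgg r b)
    (hc : IsAgg r c) (hd : IsAgg r d) (hbcd : b = c + d) (hc0 : c ≠ 0) : d = 0 :=
  (hb.2.2 c d hc hd hbcd).resolve_left hc0

variable [DecidableEq V] [DecidableEq E]

theorem leafAgg_ne_zero (v : V) (e : E) : leafAgg v e ≠ 0 := fun h => by
  simpa [leafAgg] using congrFun (congrArg Prod.fst h) v

@[simp]
theorem eulerChar_leafAgg [Fintype V] [Fintype E] (v : V) (e : E) :
    eulerChar V E (leafAgg v e) = 0 := by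
  simp [eulerChar, leafAgg, Pi.single_apply, apply_ite]

theorem leafAgg_le {b : (V → ℕ) × (E → ℕ)} {v : V} {e : E} (hv : 0 < b.1 v) (he : 0 < b.2 e) :
    leafAgg v e ≤ b := by
  refine Prod.mk_le_mk.2 ⟨fun w => ?_, fun f => ?_⟩ <;>
    simp only [Pi.single_apply] <;> split <;> simp_all [Nat.one_le_iff_ne_zero, Nat.pos_iff_ne_zero]

theorem IsAgg.add_leafAgg {c : (V → ℕ) × (E → ℕ)} {e : E} {u v : V} (hc : IsAgg r c)
    (he : r e = s(v, u)) (hroom : c.2 e < c.1 u) : IsAgg r (c + leafAgg v e) := by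
  intro f w hw
  have := hc f w hw
  by_cases hfe : f = e
  · subst hfe
    by_cases hwv : w = v
    · subst hwv; simpa [leafAgg] using this
    · obtain rfl : w = u := (Sym2.mem_iff.1 (he ▸ hw)).resolve_left hwv
      simp [leafAgg, hwv, hroom]
  · by_cases hwv : w = v
    · subst hwv; simpa [leafAgg, hfe] using Nat.le_succ_of_le this
    · simpa [leafAgg, hfe, hwv] using this

theorem IsAtomAgg.of_add_leafAgg {b : (V → ℕ) × (E → ℕ)} {e : E} {u v : V}
    (hb : IsAtomAgg r (b + leafAgg v e)) (he : r e = s(v, u)) (huv : u ≠ v)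
    (hleaf : ∀ f ≠ e, v ∈ r f → b.2 f = 0) : IsAtomAgg r b := by
  have hslack : b.2 e < b.1 u := by
    simpa [leafAgg, huv] using hb.1 e u (he ▸ Sym2.mem_mk_right v u)
  have hagg : IsAgg r b := by
    intro f w hw
    have := hb.1 f w hw
    by_cases hfe : f = e
    · subst hfe
      by_cases hwv : w = v
      · simpa [leafAgg, hwv] using this
      · exact Nat.le_of_succ_le (by simpa [leafAgg, hwv] using this)
    · by_cases hwv : w = v
      · subst hwv; simp [hleaf f hfe hw]
      · simpa [leafAgg, hfe, hwv] using this
  refine ⟨hagg, fun h => by simp [h] at hslack, fun c d hc hd hbcd => ?_⟩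
  have hsplit : c.2 e < c.1 u ∨ d.2 e < d.1 u := by
    subst hbcd; simp only [Prod.fst_add, Prod.snd_add, Pi.add_apply] at hslack; omega
  rcases hsplit with hcu | hdu
  · refine Or.inr (hb.eq_zero_of_eq_add (hc.add_leafAgg he hcu) hd ?_ ?_)
    · rw [hbcd, add_right_comm]
    · exact fun h => leafAgg_ne_zero v e (by simpa using congrArg (· - c) h)
  · refine Or.inl (hb.eq_zero_of_eq_add (hd.add_leafAgg he hdu) hc ?_ ?_)
    · rw [hbcd, add_comm c, add_right_comm]
    · exact fun h => leafAgg_ne_zero v e (by simpa using congrArg (· - d) h)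

end Atoms

theorem support_snd_mono {b c : (V → ℕ) × (E → ℕ)} (h : b ≤ c) : support b.2 ⊆ support c.2 :=
  fun f hf => ((Nat.pos_of_ne_zero hf).trans_le (h.2 f)).ne'

section Euler

variable [Fintype V] [Fintype E] {r : E → Sym2 V}

theorem IsAtomAgg.eulerChar_eq_one_of_snd_eq_zero {b : (V → ℕ) × (E → ℕ)} (hb : IsAtomAgg r b)
    (hb2 : b.2 = 0) : eulerChar V E b = 1 := by
  classical
  obtain ⟨v, hv⟩ : ∃ v, b.1 v ≠ 0 := by
    by_contra! h
    exact hb.2.1 (Prod.ext (funext h) hb2)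
  set p : (V → ℕ) × (E → ℕ) := (Pi.single v 1, 0)
  have hpb : p ≤ b := Prod.mk_le_mk.2 ⟨fun w => by
    rw [Pi.single_apply]; split <;> simp_all [Nat.one_le_iff_ne_zero], hb2.ge⟩
  obtain ⟨c, rfl⟩ := le_iff_exists_add.1 hpb
  have hc2 : c.2 = 0 := by simpa [p] using hb2
  have hagg : ∀ d : (V → ℕ) × (E → ℕ), d.2 = 0 → IsAgg r d := fun d hd e w _ => by simp [hd]
  have hc : c = 0 := hb.eq_zero_of_eq_add (hagg p rfl) (hagg c hc2) rfl
    fun h => by simpa [p] using congrFun (congrArg Prod.fst h) v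
  simp [hc, p, eulerChar, Pi.single_apply, apply_ite]

theorem IsAtomAgg.eulerChar_eq_one {b : (V → ℕ) × (E → ℕ)} (hb : IsAtomAgg r b)
    (hacyc : IsAcyclicEdgeSet r (support b.2)) : eulerChar V E b = 1 := by
  classical
  induction hn : ∑ e, b.2 e generalizing b with
  | zero => exact hb.eulerChar_eq_one_of_snd_eq_zero (funext (sum_eq_zero_iff.1 hn · (mem_univ _)))
  | succ n ih =>
    obtain ⟨e₀, -, he₀⟩ := exists_ne_zero_of_sum_ne_zero (hn.trans_ne n.succ_ne_zero)
    obtain ⟨e, he, v, hv, hleaf⟩ := hacyc.exists_leaf ⟨e₀, he₀⟩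
    obtain ⟨u, hu, huv⟩ := hacyc.exists_ne_mem he hv
    have hre : r e = s(v, u) := (Sym2.mem_and_mem_iff huv.symm).1 ⟨hv, hu⟩
    have hev : 0 < b.2 e := Nat.pos_of_ne_zero he
    obtain ⟨b', rfl⟩ := le_iff_exists_add'.1 (leafAgg_le (hev.trans_le (hb.1 e v hv)) hev)
    have hleaf' : ∀ f ≠ e, v ∈ r f → b'.2 f = 0 := fun f hfe hvf => by
      by_contra hf
      exact hfe (hleaf f (support_snd_mono le_self_add hf) hvf)
    rw [map_add, eulerChar_leafAgg, add_zero]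
    refine ih (hb.of_add_leafAgg hre huv hleaf') (hacyc.mono (support_snd_mono le_self_add)) ?_
    simpa [leafAgg, sum_add_distrib] using hn

end Euler

end Agglomerations

theorem acyclic_support_length_general {V E : Type*} [Fintype V] [Fintype E]
    (r : E → Sym2 V)
    (a : (V → ℕ) × (E → ℕ))
    (hacyc : ∀ E' : Set E, E'.Nonempty → (∀ e ∈ E', 0 < a.2 e) →
      Nat.card ↥E' < Nat.card {v : V // ∃ e ∈ E', v ∈ r e}) :
    ∀ (l : ℕ) (b : Fin l → (V → ℕ) × (E → ℕ)),
      (∀ i, IsAtomAgg r (b i)) → a = ∑ i, b i →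
      (l : ℤ) = (∑ v : V, (a.1 v : ℤ)) - ∑ e : E, (a.2 e : ℤ) := by
  intro l b hb ha
  have hacyc' : IsAcyclicEdgeSet r (support a.2) := fun E' hE' hne =>
    hacyc E' hne fun e he => Nat.pos_of_ne_zero (hE' he)
  have hone : ∀ i, eulerChar V E (b i) = 1 := fun i =>
    (hb i).eulerChar_eq_one <| hacyc'.mono <| support_snd_mono <|
      ha ▸ single_le_sum (fun j _ => zero_le) (mem_univ i)
  calc (l : ℤ) = ∑ i, eulerChar V E (b i) := by simp [hone]
    _ = eulerChar V E a := by rw [ha, map_sum]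

/-- **Acyclic support forces a unique factorization length**: if the support of
`a ∈ A(G)` is acyclic, then every factorization of `a` into atoms has length
`Σ_v a_V(v) − Σ_e a_E(e)`. -/
theorem acyclic_support_length {V E : Type*} [Fintype V] [Fintype E]
    (r : E → Sym2 V) (hr : ∀ e : E, ¬ (r e).IsDiag)
    (a : (V → ℕ) × (E → ℕ)) (ha : IsAgg r a)
    (hacyc : ∀ E' : Set E, E'.Nonempty → (∀ e ∈ E', 0 < a.2 e) →
      Nat.card ↥E' < Nat.card {v : V // ∃ e ∈ E', v ∈ r e}) :
    ∀ (l : ℕ) (b : Fin l → (V → ℕ) × (E → ℕ)),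
      (∀ i, IsAtomAgg r (b i)) → a = ∑ i, b i →
      (l : ℤ) = (∑ v : V, (a.1 v : ℤ)) - ∑ e : E, (a.2 e : ℤ) :=
  acyclic_support_length_general r a hacyc
end

section
/- Half-factoriality criterion: Let G = (V,E,r) be a graph. The monoid A(G) is half-factorial — that is, for every a ∈ A(G), any two representations of a as a sum of atoms of A(G) have the same number of summands — if and only if G is acyclic, i.e., for every nonempty subset E' ⊆ E, the number of vertices incident with at least one edge of E' is strictly greater than |E'|. -/
open Finset
open scoped Classical
set_option linter.unusedSectionVars false


namespace AggAux

variable {V E : Type*} [Fintype V] [Fintype E] (r : E → Sym2 V)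

noncomputable def inc (F : Finset E) : Finset V :=
  univ.filter (fun v => ∃ e ∈ F, v ∈ r e)

lemma mem_inc {F : Finset E} {v : V} : v ∈ inc r F ↔ ∃ e ∈ F, v ∈ r e := by
  simp [inc]

lemma inc_mono {F G : Finset E} (h : F ⊆ G) : inc r F ⊆ inc r G := by
  intro v hv
  rw [mem_inc] at *
  obtain ⟨e, he, hve⟩ := hv
  exact ⟨e, h he, hve⟩

lemma other_endpoint {z : Sym2 V} {v : V} (hv : v ∈ z) :
    ∃ w, ∀ u ∈ z, u = v ∨ u = w := by
  induction z using Sym2.ind with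
  | _ x y =>
    rcases Sym2.mem_iff.mp hv with h | h
    · exact ⟨y, fun u hu => by rcases Sym2.mem_iff.mp hu with h' | h' <;> simp [h, h']⟩
    · exact ⟨x, fun u hu => by rcases Sym2.mem_iff.mp hu with h' | h' <;> simp [h, h']⟩

lemma card_endpoints {z : Sym2 V} (hz : ¬ z.IsDiag) :
    (univ.filter (· ∈ z)).card = 2 := by
  induction z using Sym2.ind with
  | _ x y =>
    have hxy : x ≠ y := by simpa using hz
    have : (univ.filter (· ∈ (s(x, y) : Sym2 V))) = {x, y} := by
      ext u; simp [Sym2.mem_iff]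
    rw [this, card_insert_of_notMem (by simpa using hxy), card_singleton]

lemma card_inc_singleton (e : E) : (inc r {e}).card ≤ 2 := by
  obtain ⟨x, y, hre⟩ : ∃ x y, r e = s(x, y) := ⟨(r e).out.1, (r e).out.2, ((r e).out_eq).symm⟩
  · have : inc r {e} ⊆ {x, y} := by
      intro v hv
      rw [mem_inc] at hv
      obtain ⟨e', he', hv⟩ := hv
      simp only [mem_singleton] at he'
      subst he'
      rw [hre] at hv
      simpa using Sym2.mem_iff.mp hv
    calc (inc r {e}).card ≤ ({x, y} : Finset V).card := card_le_card this
    _ ≤ 2 := card_insert_le _ _ |>.trans (by simp)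

/-- `F` is connected. -/
def Conn (F : Finset E) : Prop :=
  ∀ B ⊆ F, B.Nonempty → B ≠ F → ((inc r B) ∩ (inc r (F \ B))).Nonempty

lemma conn_bound_aux (F : Finset E) (hc : Conn r F) :
    ∀ (n : ℕ) (G : Finset E), G ⊆ F → G.Nonempty → (F \ G).card = n →
      (inc r G).card ≤ G.card + 1 → (inc r F).card ≤ F.card + 1 := by
  intro n
  induction n with
  | zero =>
    intro G hGF _ hcard hG
    have : F = G := by
      have : F \ G = ∅ := card_eq_zero.mp hcard
      have h2 : F ⊆ G := fun x hx => by
        by_contra hxG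
        exact absurd (mem_sdiff.mpr ⟨hx, hxG⟩) (by simp [this])
      exact subset_antisymm h2 hGF
    rw [this]; exact hG
  | succ n ih =>
    intro G hGF hGne hcard hG
    have hGneF : G ≠ F := by
      intro h; subst h; simp at hcard
    obtain ⟨v, hv⟩ := hc G hGF hGne hGneF
    rw [mem_inter, mem_inc, mem_inc] at hv
    obtain ⟨⟨e', hGe', hve'⟩, e, heFG, hve⟩ := hv
    have hvG : v ∈ inc r G := (mem_inc r).mpr ⟨e', hGe', hve'⟩
    obtain ⟨w, hw⟩ := other_endpoint hve
    have heG : e ∉ G := (mem_sdiff.mp heFG).2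
    have heF : e ∈ F := (mem_sdiff.mp heFG).1
    have hsub : inc r (insert e G) ⊆ insert w (inc r G) := by
      intro u hu
      rw [mem_inc] at hu
      obtain ⟨e'', he'', hue⟩ := hu
      rcases mem_insert.mp he'' with h | h
      · subst h
        rcases hw u hue with h | h
        · subst h; exact mem_insert_of_mem hvG
        · subst h; exact mem_insert_self _ _
      · exact mem_insert_of_mem ((mem_inc r).mpr ⟨e'', h, hue⟩)
    have hcard' : (F \ insert e G).card = n := by
      have hEq : F \ insert e G = (F \ G).erase e := by
        ext x; simp only [mem_sdiff, mem_erase, mem_insert]; tauto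
      simp [hEq, card_erase_of_mem heFG, hcard]
    refine ih (insert e G) (insert_subset heF hGF) ⟨e, mem_insert_self _ _⟩ hcard' ?_
    calc (inc r (insert e G)).card ≤ (insert w (inc r G)).card := card_le_card hsub
      _ ≤ (inc r G).card + 1 := card_insert_le _ _
      _ ≤ G.card + 2 := by omega
      _ = (insert e G).card + 1 := by rw [card_insert_of_notMem heG]

lemma conn_bound {F : Finset E} (hne : F.Nonempty) (hc : Conn r F) :
    (inc r F).card ≤ F.card + 1 := by
  obtain ⟨e, he⟩ := hne
  exact conn_bound_aux r F hc (F \ {e}).card {e} (by simpa using he) ⟨e, mem_singleton_self e⟩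
    rfl ((card_inc_singleton r e).trans (by simp))

lemma eq_add_pointwise {a b c : (V → ℕ) × (E → ℕ)}
    (h1 : ∀ v, a.1 v = b.1 v + c.1 v) (h2 : ∀ e, a.2 e = b.2 e + c.2 e) : a = b + c :=
  Prod.ext_iff.mpr ⟨funext h1, funext h2⟩

lemma pointwise_of_eq_add {a b c : (V → ℕ) × (E → ℕ)} (h : a = b + c) :
    (∀ v, a.1 v = b.1 v + c.1 v) ∧ (∀ e, a.2 e = b.2 e + c.2 e) :=
  ⟨fun v => by rw [h]; rfl, fun e => by rw [h]; rfl⟩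

lemma eq_zero_pointwise {a : (V → ℕ) × (E → ℕ)}
    (h1 : ∀ v, a.1 v = 0) (h2 : ∀ e, a.2 e = 0) : a = 0 :=
  Prod.ext_iff.mpr ⟨funext h1, funext h2⟩

lemma pointwise_of_eq_zero {a : (V → ℕ) × (E → ℕ)} (h : a = 0) :
    (∀ v, a.1 v = 0) ∧ (∀ e, a.2 e = 0) :=
  ⟨fun v => by rw [h]; rfl, fun e => by rw [h]; rfl⟩

/-- vertex atom -/
noncomputable def delta (v : V) : (V → ℕ) × (E → ℕ) :=
  (fun u => if u = v then 1 else 0, 0)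

/-- edge atom -/
noncomputable def edgeAgg (e : E) : (V → ℕ) × (E → ℕ) :=
  (fun v => if v ∈ r e then 1 else 0, fun e' => if e' = e then 1 else 0)

/-- connected-subgraph atom -/
noncomputable def setAgg (F : Finset E) : (V → ℕ) × (E → ℕ) :=
  (fun v => if v ∈ inc r F then 1 else 0, fun e => if e ∈ F then 1 else 0)

lemma isAtom_delta (v : V) : IsAtomAgg r (delta (E := E) v) := by
  refine ⟨fun e u _ => by simp [delta], ?_, ?_⟩
  · intro h
    have := (pointwise_of_eq_zero h).1 v
    simp [delta] at this
  · intro b c hb hc h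
    obtain ⟨h1, h2⟩ := pointwise_of_eq_add h
    simp only [delta] at h1 h2
    by_cases hbv : b.1 v = 0
    · left
      refine eq_zero_pointwise (fun u => ?_) (fun e => ?_)
      · rcases eq_or_ne u v with rfl | hu
        · have := h1 u; simp at this; omega
        · have := h1 u; simp [hu] at this; omega
      · have := h2 e; simpa using (Nat.eq_zero_of_add_eq_zero_right (by simpa using this.symm))
    · right
      refine eq_zero_pointwise (fun u => ?_) (fun e => ?_)
      · rcases eq_or_ne u v with rfl | hu
        · have := h1 u; simp at this; omega
        · have := h1 u; simp [hu] at this; omega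
      · have := h2 e; simp at this; omega

lemma isAtom_edge (e : E) : IsAtomAgg r (edgeAgg r e) := by
  refine ⟨?_, ?_, ?_⟩
  · intro e' v hv
    simp only [edgeAgg]
    by_cases h : e' = e
    · subst h; simp [hv]
    · simp [h]
  · intro h
    have := (pointwise_of_eq_zero h).2 e
    simp [edgeAgg] at this
  · intro b c hb hc h
    obtain ⟨h1, h2⟩ := pointwise_of_eq_add h
    simp only [edgeAgg] at h1 h2
    have he := h2 e
    simp at he
    rcases (by omega : b.2 e = 1 ∧ c.2 e = 0 ∨ b.2 e = 0 ∧ c.2 e = 1) with ⟨hb1, hc0⟩ | ⟨hb0, hc1⟩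
    · right
      refine eq_zero_pointwise (fun u => ?_) (fun e' => ?_)
      · have hu := h1 u
        by_cases h' : u ∈ r e
        · have : 1 ≤ b.1 u := hb1 ▸ hb e u h'
          simp [h'] at hu; omega
        · simp [h'] at hu; omega
      · have := h2 e'
        by_cases h' : e' = e
        · subst h'; omega
        · simp [h'] at this; omega
    · left
      refine eq_zero_pointwise (fun u => ?_) (fun e' => ?_)
      · have hu := h1 u
        by_cases h' : u ∈ r e
        · have : 1 ≤ c.1 u := hc1 ▸ hc e u h'
          simp [h'] at hu; omega
        · simp [h'] at hu; omega
      · have := h2 e'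
        by_cases h' : e' = e
        · subst h'; omega
        · simp [h'] at this; omega

lemma isAtom_setAgg {F : Finset E} (hne : F.Nonempty) (hc : Conn r F) :
    IsAtomAgg r (setAgg r F) := by
  refine ⟨?_, ?_, ?_⟩
  · intro e v hv
    simp only [setAgg]
    by_cases h : e ∈ F
    · simp [h, (mem_inc r).mpr ⟨e, h, hv⟩]
    · simp [h]
  · intro h
    obtain ⟨e, he⟩ := hne
    have := (pointwise_of_eq_zero h).2 e
    simp [setAgg, he] at this
  · intro b c hb hc' h
    obtain ⟨h1, h2⟩ := pointwise_of_eq_add h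
    simp only [setAgg] at h1 h2
    set B := F.filter (fun e => 1 ≤ b.2 e) with hB
    have hBF : B ⊆ F := filter_subset _ _
    rcases eq_empty_or_nonempty B with hBe | hBne
    · -- b has no edges in F, so c has all of them; b = 0
      left
      have hcF : ∀ e ∈ F, c.2 e = 1 := by
        intro e he
        have h0 : ¬ (1 ≤ b.2 e) := fun hx => by
          have : e ∈ B := mem_filter.mpr ⟨he, hx⟩
          simp [hBe] at this
        have := h2 e; simp [he] at this; omega
      refine eq_zero_pointwise (fun u => ?_) (fun e => ?_)
      · have hu := h1 u
        by_cases h' : u ∈ inc r F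
        · obtain ⟨e, he, hue⟩ := (mem_inc r).mp h'
          have : 1 ≤ c.1 u := (hcF e he) ▸ hc' e u hue
          simp [h'] at hu; omega
        · simp [h'] at hu; omega
      · have := h2 e
        by_cases h' : e ∈ F
        · have := hcF e h'; have h2e := h2 e; simp [h'] at h2e; omega
        · simp [h'] at this; omega
    · by_cases hBeq : B = F
      · -- b has all edges, c = 0
        right
        have hbF : ∀ e ∈ F, 1 ≤ b.2 e := fun e he => (mem_filter.mp (show e ∈ B by rw [hBeq]; exact he)).2
        refine eq_zero_pointwise (fun u => ?_) (fun e => ?_)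
        · have hu := h1 u
          by_cases h' : u ∈ inc r F
          · obtain ⟨e, he, hue⟩ := (mem_inc r).mp h'
            have : 1 ≤ b.1 u := le_trans (hbF e he) (hb e u hue)
            simp [h'] at hu; omega
          · simp [h'] at hu; omega
        · have h2e := h2 e
          by_cases h' : e ∈ F
          · have := hbF e h'; simp [h'] at h2e; omega
          · simp [h'] at h2e; omega
      · -- B nonempty proper: contradiction with connectivity
        exfalso
        obtain ⟨v, hv⟩ := hc B hBF hBne hBeq
        rw [mem_inter, mem_inc, mem_inc] at hv
        obtain ⟨⟨e, heB, hve⟩, e', he', hve'⟩ := hv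
        have hvF : v ∈ inc r F := (mem_inc r).mpr ⟨e, hBF heB, hve⟩
        have hb1 : 1 ≤ b.1 v := le_trans (mem_filter.mp heB).2 (hb e v hve)
        have he'F : e' ∈ F := (mem_sdiff.mp he').1
        have he'B : e' ∉ B := (mem_sdiff.mp he').2
        have hce' : 1 ≤ c.2 e' := by
          have h0 : ¬ (1 ≤ b.2 e') := fun hx => he'B (mem_filter.mpr ⟨he'F, hx⟩)
          have := h2 e'; simp [he'F] at this; omega
        have hc1 : 1 ≤ c.1 v := le_trans hce' (hc' e' v hve')
        have := h1 v; simp [hvF] at this; omega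

lemma atom_vals_le_one {a : (V → ℕ) × (E → ℕ)} (ha : IsAtomAgg r a) :
    (∀ v, a.1 v ≤ 1) ∧ (∀ e, a.2 e ≤ 1) := by
  obtain ⟨hagg, hne, hsplit⟩ := ha
  set b : (V → ℕ) × (E → ℕ) := (fun v => min (a.1 v) 1, fun e => min (a.2 e) 1) with hb
  set c : (V → ℕ) × (E → ℕ) := (fun v => a.1 v - 1, fun e => a.2 e - 1) with hc
  have hbagg : IsAgg r b := fun e v hv => by
    simp only [hb]; exact min_le_min_right 1 (hagg e v hv)
  have hcagg : IsAgg r c := fun e v hv => by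
    simp only [hc]; exact Nat.sub_le_sub_right (hagg e v hv) 1
  have hsum : a = b + c :=
    eq_add_pointwise (fun v => by simp only [hb, hc]; omega)
      (fun e => by simp only [hb, hc]; omega)
  rcases hsplit b c hbagg hcagg hsum with h0 | h0
  · exfalso
    apply hne
    obtain ⟨h1, h2⟩ := pointwise_of_eq_zero h0
    refine eq_zero_pointwise (fun v => ?_) (fun e => ?_)
    · have := h1 v; simp only [hb] at this; omega
    · have := h2 e; simp only [hb] at this; omega
  · obtain ⟨h1, h2⟩ := pointwise_of_eq_zero h0
    constructor
    · intro v; have := h1 v; simp only [hc] at this; omega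
    · intro e; have := h2 e; simp only [hc] at this; omega

lemma atom_sum (hacy : ∀ F : Finset E, F.Nonempty → F.card < (inc r F).card)
    {a : (V → ℕ) × (E → ℕ)} (ha : IsAtomAgg r a) :
    ∑ v, a.1 v = (∑ e, a.2 e) + 1 := by
  obtain ⟨hV1, hE1⟩ := atom_vals_le_one r ha
  obtain ⟨hagg, hne, hsplit⟩ := ha
  set S : Finset V := univ.filter (fun v => a.1 v = 1) with hS
  set F : Finset E := univ.filter (fun e => a.2 e = 1) with hF
  have hsumV : ∑ v, a.1 v = S.card := by
    rw [hS, card_filter]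
    refine Finset.sum_congr rfl (fun v _ => ?_)
    have := hV1 v; split <;> omega
  have hsumE : ∑ e, a.2 e = F.card := by
    rw [hF, card_filter]
    refine Finset.sum_congr rfl (fun e _ => ?_)
    have := hE1 e; split <;> omega
  rcases eq_empty_or_nonempty F with hFe | hFne
  · -- no edges: a is supported on a single vertex
    have hE0 : ∀ e, a.2 e = 0 := by
      intro e
      have : e ∉ F := by simp [hFe]
      simp only [hF, mem_filter, mem_univ, true_and] at this
      have := hE1 e; omega
    have hSne : S.Nonempty := by
      rcases eq_empty_or_nonempty S with hSe | h
      · exfalso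
        apply hne
        refine eq_zero_pointwise (fun v => ?_) hE0
        have : v ∉ S := by simp [hSe]
        simp only [hS, mem_filter, mem_univ, true_and] at this
        have := hV1 v; omega
      · exact h
    obtain ⟨v, hv⟩ := hSne
    have hav : a.1 v = 1 := (mem_filter.mp hv).2
    have hScard : S = {v} := by
      ext w
      simp only [mem_singleton]
      constructor
      · intro hw
        by_contra hwv
        have haw : a.1 w = 1 := (mem_filter.mp hw).2
        have := hsplit (delta v) (fun u => if u = v then 0 else a.1 u, fun _ => 0)
          (fun e u _ => by simp [delta]) (fun e u _ => by simp)
          (eq_add_pointwise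
            (fun u => by
              simp only [delta]
              rcases eq_or_ne u v with rfl | hu
              · simp [hav]
              · simp [hu])
            (fun e => by simp [delta, hE0 e]))
        rcases this with h0 | h0
        · have := (pointwise_of_eq_zero h0).1 v; simp [delta] at this
        · have := (pointwise_of_eq_zero h0).1 w
          simp only at this
          rw [if_neg hwv] at this
          omega
      · intro h; subst h; exact hv
    rw [hsumV, hsumE, hScard]
    simp [hFe]
  · -- F nonempty
    have hSF : ∀ v, a.1 v = 1 ↔ v ∈ inc r F := by
      intro v
      constructor
      · intro hv1
        by_contra hvF
        have := hsplit (delta v) (fun u => if u = v then 0 else a.1 u, a.2)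
          (fun e u _ => by simp [delta])
          (fun e u hu => by
            simp only
            rcases eq_or_ne u v with rfl | huv
            · rw [if_pos rfl]
              by_contra hpos
              have h1 : a.2 e = 1 := by have := hE1 e; omega
              exact hvF ((mem_inc r).mpr ⟨e, mem_filter.mpr ⟨mem_univ e, h1⟩, hu⟩)
            · rw [if_neg huv]; exact hagg e u hu)
          (eq_add_pointwise
            (fun u => by
              simp only [delta]
              rcases eq_or_ne u v with rfl | hu
              · simp [hv1]
              · simp [hu])
            (fun e => by simp [delta]))
        rcases this with h0 | h0
        · have := (pointwise_of_eq_zero h0).1 v; simp [delta] at this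
        · obtain ⟨e, he⟩ := hFne
          have := (pointwise_of_eq_zero h0).2 e
          simp only at this
          have : a.2 e = 0 := this
          have := (mem_filter.mp he).2
          omega
      · intro hv
        obtain ⟨e, he, hve⟩ := (mem_inc r).mp hv
        have h1 : a.2 e = 1 := (mem_filter.mp he).2
        have := hagg e v hve
        have := hV1 v
        omega
    have hSeq : S = inc r F := by
      ext v; simp only [hS, mem_filter, mem_univ, true_and]; exact hSF v
    have hconn : Conn r F := by
      intro B hBF hBne hBneF
      by_contra hint
      rw [not_nonempty_iff_eq_empty] at hint
      have hdisj : ∀ x ∈ inc r B, x ∉ inc r (F \ B) := by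
        intro x hx hx'
        have : x ∈ inc r B ∩ inc r (F \ B) := mem_inter.mpr ⟨hx, hx'⟩
        simp [hint] at this
      obtain ⟨eB, heB⟩ := hBne
      obtain ⟨eC, heC⟩ : (F \ B).Nonempty := by
        rcases eq_empty_or_nonempty (F \ B) with h | h
        · exfalso; apply hBneF
          apply subset_antisymm hBF
          intro x hx
          by_contra hxB
          have : x ∈ F \ B := mem_sdiff.mpr ⟨hx, hxB⟩
          simp [h] at this
        · exact h
      set b : (V → ℕ) × (E → ℕ) :=
        (fun v => if v ∈ inc r B then 1 else 0, fun e => if e ∈ B then 1 else 0) with hb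
      set c : (V → ℕ) × (E → ℕ) :=
        (fun v => a.1 v - b.1 v, fun e => a.2 e - b.2 e) with hc
      have hbagg : IsAgg r b := by
        intro e u hu
        simp only [hb]
        by_cases h : e ∈ B
        · simp [h, (mem_inc r).mpr ⟨e, h, hu⟩]
        · simp [h]
      have hbleV : ∀ v, b.1 v ≤ a.1 v := by
        intro v
        simp only [hb]
        by_cases h : v ∈ inc r B
        · have : v ∈ inc r F := inc_mono r hBF h
          rw [← hSF v] at this; simp [h, this]
        · simp [h]
      have hbleE : ∀ e, b.2 e ≤ a.2 e := by
        intro e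
        simp only [hb]
        by_cases h : e ∈ B
        · have : e ∈ F := hBF h
          have : a.2 e = 1 := (mem_filter.mp this).2
          simp [h, this]
        · simp [h]
      have hcagg : IsAgg r c := by
        intro e u hu
        simp only [hc]
        have hae := hE1 e
        rcases (by omega : a.2 e = 0 ∨ a.2 e = 1) with h0 | h1
        · simp [h0]
        · have heF : e ∈ F := mem_filter.mpr ⟨mem_univ e, h1⟩
          by_cases heB : e ∈ B
          · simp [hb, heB, h1]
          · have huFB : u ∈ inc r (F \ B) := (mem_inc r).mpr ⟨e, mem_sdiff.mpr ⟨heF, heB⟩, hu⟩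
            have huB : u ∉ inc r B := fun hx => hdisj u hx huFB
            have huF : u ∈ inc r F := inc_mono r (sdiff_subset) huFB
            have hau : a.1 u = 1 := (hSF u).mpr huF
            simp [hb, heB, huB, h1, hau]
      have := hsplit b c hbagg hcagg
        (eq_add_pointwise (fun v => by have := hbleV v; simp only [hc, hb] at this ⊢; omega)
          (fun e => by have := hbleE e; simp only [hc, hb] at this ⊢; omega))
      rcases this with h0 | h0
      · have := (pointwise_of_eq_zero h0).2 eB
        simp [hb, heB] at this
      · have := (pointwise_of_eq_zero h0).2 eC
        have hCF : eC ∈ F := (mem_sdiff.mp heC).1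
        have hCB : eC ∉ B := (mem_sdiff.mp heC).2
        have haC : a.2 eC = 1 := (mem_filter.mp hCF).2
        simp only [hc, hb, if_neg hCB] at this
        omega
    have hle : (inc r F).card ≤ F.card + 1 := conn_bound r hFne hconn
    have hgt : F.card < (inc r F).card := hacy F hFne
    rw [hsumV, hsumE, hSeq]
    omega

lemma isAgg_sum {ι : Type*} (s : Finset ι) (f : ι → (V → ℕ) × (E → ℕ))
    (h : ∀ i ∈ s, IsAgg r (f i)) : IsAgg r (∑ i ∈ s, f i) := by
  intro e v hv
  rw [Prod.fst_sum, Prod.snd_sum, Finset.sum_apply, Finset.sum_apply]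
  exact Finset.sum_le_sum (fun i hi => h i hi e v hv)

end AggAux

open AggAux


open AggAux

/-- **Half-factoriality criterion**: `A(G)` is half-factorial (all factorizations of an
element into atoms have the same length) if and only if `G` is acyclic. -/
theorem half_factorial_iff_acyclic {V E : Type*} [Fintype V] [Fintype E]
    (r : E → Sym2 V) (hr : ∀ e : E, ¬ (r e).IsDiag) :
    (∀ a : (V → ℕ) × (E → ℕ), IsAgg r a →
      ∀ (k l : ℕ) (b : Fin k → (V → ℕ) × (E → ℕ)) (c : Fin l → (V → ℕ) × (E → ℕ)),
        (∀ i, IsAtomAgg r (b i)) → (∀ j, IsAtomAgg r (c j)) →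
        a = ∑ i, b i → a = ∑ j, c j → k = l) ↔
    (∀ E' : Set E, E'.Nonempty →
      Nat.card ↥E' < Nat.card {v : V // ∃ e ∈ E', v ∈ r e}) := by

  have hcard1 : ∀ E' : Set E, Nat.card ↥E' = E'.toFinset.card := by
    intro E'
    rw [Nat.card_eq_fintype_card, Set.toFinset_card]
  have hcard2 : ∀ E' : Set E,
      Nat.card {v : V // ∃ e ∈ E', v ∈ r e} = (inc r E'.toFinset).card := by
    intro E'
    rw [Nat.card_eq_fintype_card, Fintype.card_subtype]
    congr 1
    apply Finset.filter_congr
    intro v _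
    constructor
    · rintro ⟨e, he, hv⟩; exact ⟨e, Set.mem_toFinset.mpr he, hv⟩
    · rintro ⟨e, he, hv⟩; exact ⟨e, Set.mem_toFinset.mp he, hv⟩
  constructor
  · -- half-factorial → acyclic
    intro hHF
    by_contra hnot
    push_neg at hnot
    obtain ⟨E', hne, hle⟩ := hnot
    rw [hcard1, hcard2] at hle
    have hP : ∃ n, ∃ F : Finset E, F.Nonempty ∧ (inc r F).card ≤ F.card ∧ F.card = n := by
      refine ⟨E'.toFinset.card, E'.toFinset, ?_, hle, rfl⟩
      obtain ⟨e, he⟩ := hne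
      exact ⟨e, Set.mem_toFinset.mpr he⟩
    obtain ⟨F, hFne, hFle, hFcard⟩ := Nat.find_spec hP
    have hmin : ∀ F' : Finset E, F'.Nonempty → (inc r F').card ≤ F'.card →
        Nat.find hP ≤ F'.card := fun F' h1 h2 => Nat.find_min' hP ⟨F', h1, h2, rfl⟩
    -- F is connected
    have hconn : Conn r F := by
      intro B hBF hBne hBneF
      by_contra hint
      rw [Finset.not_nonempty_iff_eq_empty] at hint
      have hunion : inc r F = inc r B ∪ inc r (F \ B) := by
        ext v
        simp only [Finset.mem_union, mem_inc]
        constructor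
        · rintro ⟨e, he, hv⟩
          by_cases h : e ∈ B
          · exact Or.inl ⟨e, h, hv⟩
          · exact Or.inr ⟨e, Finset.mem_sdiff.mpr ⟨he, h⟩, hv⟩
        · rintro (⟨e, he, hv⟩ | ⟨e, he, hv⟩)
          · exact ⟨e, hBF he, hv⟩
          · exact ⟨e, (Finset.mem_sdiff.mp he).1, hv⟩
      have hdisj : Disjoint (inc r B) (inc r (F \ B)) :=
        Finset.disjoint_iff_inter_eq_empty.mpr hint
      have hcardU : (inc r F).card = (inc r B).card + (inc r (F \ B)).card := by
        rw [hunion, Finset.card_union_of_disjoint hdisj]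
      have hcardF : (F \ B).card + B.card = F.card := Finset.card_sdiff_add_card_eq_card hBF
      have hFBne : (F \ B).Nonempty := by
        rcases Finset.eq_empty_or_nonempty (F \ B) with h | h
        · exfalso
          apply hBneF
          apply Finset.Subset.antisymm hBF
          intro x hx
          by_contra hxB
          have : x ∈ F \ B := Finset.mem_sdiff.mpr ⟨hx, hxB⟩
          simp [h] at this
        · exact h
      have hBlt : B.card < F.card := Finset.card_lt_card (Finset.ssubset_iff_subset_ne.mpr ⟨hBF, hBneF⟩)
      have hFBlt : (F \ B).card < F.card := by
        have : 1 ≤ B.card := Finset.card_pos.mpr hBne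
        omega
      rcases (by omega : (inc r B).card ≤ B.card ∨ (inc r (F \ B)).card ≤ (F \ B).card) with h | h
      · have := hmin B hBne h; omega
      · have := hmin (F \ B) hFBne h; omega
    -- degrees
    set deg : V → ℕ := fun v => (F.filter (fun e => v ∈ r e)).card with hdeg
    have hdeg_pos : ∀ v, v ∈ inc r F ↔ 0 < deg v := by
      intro v
      rw [mem_inc, hdeg]
      simp only [Finset.card_pos, Finset.filter_nonempty_iff]
    set a : (V → ℕ) × (E → ℕ) := ∑ e ∈ F, edgeAgg r e with ha
    have ha1 : ∀ v, a.1 v = deg v := by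
      intro v
      rw [ha, Prod.fst_sum, Finset.sum_apply]
      simp only [edgeAgg]
      exact (Finset.card_filter _ _).symm
    have ha2 : ∀ e, a.2 e = if e ∈ F then 1 else 0 := by
      intro e
      rw [ha, Prod.snd_sum, Finset.sum_apply]
      simp only [edgeAgg]
      rw [Finset.sum_ite_eq F e (fun _ => 1)]
    have haagg : IsAgg r a := isAgg_sum r F _ (fun e _ => (isAtom_edge r e).1)
    -- first factorization
    set n := F.card with hn
    set bfun : Fin n → (V → ℕ) × (E → ℕ) := fun i => edgeAgg r ((F.equivFin.symm i) : E) with hbfun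
    have hbsum : a = ∑ i, bfun i := by
      rw [ha, hbfun]
      rw [Equiv.sum_comp F.equivFin.symm (fun x : {x // x ∈ F} => edgeAgg r (x : E))]
      exact (Finset.sum_coe_sort F (fun e => edgeAgg r e)).symm
    -- second factorization
    have hmT : ∀ v, deg v = (if v ∈ inc r F then 1 else 0) + (deg v - 1) := by
      intro v
      by_cases h : v ∈ inc r F
      · have := (hdeg_pos v).mp h; simp [h]; omega
      · have : ¬ 0 < deg v := fun hx => h ((hdeg_pos v).mpr hx)
        simp [h]; omega
    set cfun' : (Unit ⊕ (Σ v : V, Fin (deg v - 1))) → (V → ℕ) × (E → ℕ) :=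
      Sum.elim (fun _ => setAgg r F) (fun p => delta p.1) with hcfun'
    set l := Fintype.card (Unit ⊕ (Σ v : V, Fin (deg v - 1))) with hl
    set cfun : Fin l → (V → ℕ) × (E → ℕ) :=
      fun j => cfun' ((Fintype.equivFin (Unit ⊕ (Σ v : V, Fin (deg v - 1)))).symm j) with hcfun
    have hTsum : ∑ t : Unit ⊕ (Σ v : V, Fin (deg v - 1)), cfun' t
        = setAgg r F + ∑ v, (deg v - 1) • delta (E := E) v := by
      rw [hcfun', Fintype.sum_sum_type]
      have h1 : ∑ p : (v : V) × Fin (deg v - 1), delta (E := E) p.fst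
          = ∑ v, (deg v - 1) • delta (E := E) v := by
        rw [← Finset.univ_sigma_univ, Finset.sum_sigma]
        refine Finset.sum_congr rfl (fun v _ => ?_)
        simp
      simp only [Sum.elim_inl, Sum.elim_inr]
      rw [h1]
      have h2 : ∑ _x : Unit, setAgg r F = setAgg r F := by simp
      rw [h2]
    have hstep : ∑ j, cfun j = ∑ t : Unit ⊕ (Σ v : V, Fin (deg v - 1)), cfun' t := by
      rw [hcfun]
      exact Equiv.sum_comp (Fintype.equivFin _).symm cfun'
    have hcsum : a = ∑ j, cfun j := by
      rw [hstep, hTsum]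
      refine eq_add_pointwise (fun v => ?_) (fun e => ?_)
      · have h3 : (∑ w, (deg w - 1) • delta (E := E) w).1 v = deg v - 1 := by
          rw [Prod.fst_sum, Finset.sum_apply]
          simp [delta, mul_ite]
        rw [ha1, h3]
        simp only [setAgg]
        exact hmT v
      · have h3 : (∑ w, (deg w - 1) • delta (E := E) w).2 e = 0 := by
          rw [Prod.snd_sum, Finset.sum_apply]
          simp [delta]
        rw [ha2, h3]
        simp [setAgg]
    have hlval : l = 1 + ∑ v, (deg v - 1) := by
      rw [hl, Fintype.card_sum, Fintype.card_unit, Fintype.card_sigma]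
      simp
    have hsum_deg : ∑ v, deg v = 2 * n := by
      have h1 : ∑ v : V, deg v = ∑ v : V, ∑ e ∈ F, (if v ∈ r e then 1 else 0) :=
        Finset.sum_congr rfl (fun v _ => Finset.card_filter _ _)
      rw [h1, Finset.sum_comm]
      have h2 : ∀ e ∈ F, (∑ v : V, if v ∈ r e then 1 else 0) = 2 := by
        intro e _
        rw [← Finset.card_filter]
        exact card_endpoints (hr e)
      rw [Finset.sum_congr rfl h2, Finset.sum_const, smul_eq_mul]
      ring
    have hsum_ind : ∑ v : V, (if v ∈ inc r F then 1 else 0) = (inc r F).card := by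
      rw [← Finset.card_filter]
      congr 1
      ext v; simp
    have hsum_sub : ∑ v, (deg v - 1) = 2 * n - (inc r F).card := by
      have heq : ∀ v ∈ Finset.univ, (deg v - 1) = deg v - (if v ∈ inc r F then 1 else 0) := by
        intro v _
        by_cases h : v ∈ inc r F
        · simp [h]
        · have : ¬ 0 < deg v := fun hx => h ((hdeg_pos v).mpr hx)
          simp [h]; omega
      rw [Finset.sum_congr rfl heq,
        Finset.sum_tsub_distrib Finset.univ (fun v _ => by split <;> [exact (hdeg_pos v).mp ‹_›; omega]),
        hsum_deg, hsum_ind]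
    -- apply half-factoriality
    have hkl := hHF a haagg n l bfun cfun
      (fun i => isAtom_edge r _)
      (fun j => by
        rw [hcfun]
        rcases h : (Fintype.equivFin (Unit ⊕ (Σ v : V, Fin (deg v - 1)))).symm j with t | p
        · simp only [hcfun', h, Sum.elim_inl]
          exact isAtom_setAgg r hFne hconn
        · simp only [hcfun', h, Sum.elim_inr]
          exact isAtom_delta r _)
      hbsum hcsum
    have hn1 : 1 ≤ n := Finset.card_pos.mpr hFne
    have hincle : (inc r F).card ≤ n := by rw [hn]; exact hFle
    omega
  · -- acyclic → half-factorial
    intro hacy a hagg k l b c hb hc hbsum hcsum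
    have hacy' : ∀ F : Finset E, F.Nonempty → F.card < (inc r F).card := by
      intro F hFne
      have := hacy (↑F : Set E) (by exact_mod_cast hFne)
      rw [hcard1, hcard2] at this
      rw [Finset.toFinset_coe] at this
      exact this
    have key : ∀ (m : ℕ) (f : Fin m → (V → ℕ) × (E → ℕ)), (∀ i, IsAtomAgg r (f i)) →
        ∀ x : (V → ℕ) × (E → ℕ), x = ∑ i, f i → ∑ v, x.1 v = (∑ e, x.2 e) + m := by
      intro m f hf x hx
      have h1 : ∑ v, x.1 v = ∑ i, ∑ v, (f i).1 v := by
        rw [hx, Prod.fst_sum]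
        rw [Finset.sum_comm]
        simp [Finset.sum_apply]
      have h2 : ∑ e, x.2 e = ∑ i, ∑ e, (f i).2 e := by
        rw [hx, Prod.snd_sum]
        rw [Finset.sum_comm]
        simp [Finset.sum_apply]
      rw [h1, h2]
      have : ∀ i : Fin m, ∑ v, (f i).1 v = (∑ e, (f i).2 e) + 1 :=
        fun i => atom_sum r hacy' (hf i)
      rw [Finset.sum_congr rfl (fun i _ => this i), Finset.sum_add_distrib]
      simp
    have hk := key k b hb a hbsum
    have hl := key l c hc a hcsum
    omega
end

section
/- Duplicate columns of a Diophantine monoid: Let m ≥ 1, n ≥ 2, and let B be an m × n matrix with integer entries whose first column equals its second column. Let H = {x ∈ ℕⁿ : B·x = 0} (an additive submonoid of ℕⁿ), let B' be the m × (n−1) matrix obtained from B by deleting the second column, and let H' = {y ∈ ℕ^{n−1} : B'·y = 0}. Define θ : H → H' by θ(x₁, x₂, x₃, …, x_n) = (x₁ + x₂, x₃, …, x_n). Then θ is a well-defined additive monoid homomorphism (its values indeed lie in H'), θ is surjective, θ(x) = 0 implies x = 0, and θ is a transfer homomorphism: whenever θ(x) = y + z with y, z ∈ H', there exist v, w ∈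 H with x = v + w, θ(v) = y and θ(w) = z. -/
/-- **Duplicate columns of a Diophantine monoid**: if the first two columns of the
integer matrix `B` coincide (here `B` has `n + 2 ≥ 2` columns, indexed by `Fin (n+2)`),
`H = ker(B) ∩ ℕ^{n+2}` and `H'` is the Diophantine monoid of the matrix `B'` obtained by
deleting the second column, then `θ(x₁,x₂,x₃,…) = (x₁+x₂,x₃,…)` is a well-defined,
surjective, additive transfer homomorphism `H → H'` with trivial kernel. -/
theorem duplicate_columns_transfer (m n : ℕ) (hm : 1 ≤ m)
    (B : Matrix (Fin m) (Fin (n + 2)) ℤ)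
    (hdup : ∀ i : Fin m, B i 0 = B i 1)
    (H : Set (Fin (n + 2) → ℕ))
    (hH : H = {x : Fin (n + 2) → ℕ | ∀ i : Fin m, ∑ j, B i j * (x j : ℤ) = 0})
    (B' : Matrix (Fin m) (Fin (n + 1)) ℤ)
    (hB' : ∀ (i : Fin m) (j : Fin (n + 1)),
      B' i j = if j = 0 then B i 0 else B i j.succ)
    (H' : Set (Fin (n + 1) → ℕ))
    (hH' : H' = {y : Fin (n + 1) → ℕ | ∀ i : Fin m, ∑ j, B' i j * (y j : ℤ) = 0})
    (θ : (Fin (n + 2) → ℕ) → (Fin (n + 1) → ℕ))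
    (hθ : ∀ (x : Fin (n + 2) → ℕ) (j : Fin (n + 1)),
      θ x j = if j = 0 then x 0 + x 1 else x j.succ) :
    -- well-defined
    (∀ x ∈ H, θ x ∈ H') ∧
    -- additive monoid homomorphism
    (θ 0 = 0) ∧ (∀ x y : Fin (n + 2) → ℕ, θ (x + y) = θ x + θ y) ∧
    -- surjective onto H'
    (∀ y ∈ H', ∃ x ∈ H, θ x = y) ∧
    -- trivial kernel
    (∀ x ∈ H, θ x = 0 → x = 0) ∧
    -- transfer property
    (∀ x ∈ H, ∀ y ∈ H', ∀ z ∈ H', θ x = y + z →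
      ∃ v ∈ H, ∃ w ∈ H, x = v + w ∧ θ v = y ∧ θ w = z) := by
  subst hH hH'
  -- key sum identity
  have key : ∀ (x : Fin (n+2) → ℕ) (i : Fin m),
      ∑ j, B' i j * (θ x j : ℤ) = ∑ j, B i j * (x j : ℤ) := by
    intro x i
    rw [Fin.sum_univ_succ (f := fun j => B' i j * (θ x j : ℤ)),
        Fin.sum_univ_succ (f := fun j => B i j * (x j : ℤ)),
        Fin.sum_univ_succ (f := fun j => B i j.succ * (x j.succ : ℤ))]
    simp only [hB', hθ, Fin.succ_ne_zero, if_false, if_pos rfl, Fin.succ_zero_eq_one]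
    push_cast
    rw [hdup i]
    ring
  have memH : ∀ x : Fin (n+2) → ℕ,
      x ∈ {x : Fin (n + 2) → ℕ | ∀ i : Fin m, ∑ j, B i j * (x j : ℤ) = 0} ↔
      θ x ∈ {y : Fin (n + 1) → ℕ | ∀ i : Fin m, ∑ j, B' i j * (y j : ℤ) = 0} := by
    intro x
    constructor <;> intro h i
    · rw [key x i]; exact h i
    · rw [← key x i]; exact h i
  have hmap : ∀ x y : Fin (n + 2) → ℕ, θ (x + y) = θ x + θ y := by
    intro x y
    funext j
    simp only [Pi.add_apply, hθ]
    split <;> ring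
  have hzero : θ 0 = 0 := by
    funext j
    simp only [hθ, Pi.zero_apply]
    split <;> rfl
  -- for y : Fin (n+1) → ℕ and a b with a + b = y 0, a "lift"
  have lift : ∀ (y : Fin (n+1) → ℕ) (a b : ℕ), a + b = y 0 →
      ∃ x : Fin (n+2) → ℕ, θ x = y ∧ x 0 = a ∧ x 1 = b := by
    intro y a b hab
    refine ⟨Fin.cons a (Fin.cons b (fun k : Fin n => y k.succ)), ?_, rfl, rfl⟩
    funext j
    rw [hθ]
    refine Fin.cases ?_ (fun k => ?_) j
    · simpa using hab
    · rw [if_neg (Fin.succ_ne_zero k)]; simp [Fin.cons_succ]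
  refine ⟨fun x hx => (memH x).1 hx, hzero, hmap, ?_, ?_, ?_⟩
  · -- surjective
    intro y hy
    obtain ⟨x, hxy, -, -⟩ := lift y (y 0) 0 (by omega)
    exact ⟨x, (memH x).2 (hxy ▸ hy), hxy⟩
  · -- trivial kernel
    intro x hx h0
    funext j
    have h1 : ∀ j : Fin (n+1), θ x j = 0 := fun j => by rw [h0]; rfl
    have h2 := h1 0
    rw [hθ] at h2; simp at h2
    refine Fin.cases (by simp [h2.1]) (fun k => ?_) j
    refine Fin.cases (by simpa using h2.2) (fun l => ?_) k
    have := h1 l.succ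
    rw [hθ, if_neg (Fin.succ_ne_zero l)] at this
    simpa using this
  · -- transfer
    intro x hx y hy z hz hsum
    have h0 : x 0 + x 1 = y 0 + z 0 := by
      have := congrFun hsum 0
      rw [hθ] at this; simpa using this
    set a := min (x 0) (y 0) with ha
    obtain ⟨v, hv, hv0, hv1⟩ := lift y a (y 0 - a) (by omega)
    obtain ⟨w, hw, hw0, hw1⟩ := lift z (x 0 - a) (z 0 - (x 0 - a)) (by omega)
    refine ⟨v, (memH v).2 (hv ▸ hy), w, (memH w).2 (hw ▸ hz), ?_, hv, hw⟩
    funext j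
    have hvw : ∀ k : Fin n, v k.succ.succ + w k.succ.succ = x k.succ.succ := by
      intro k
      have h1 := congrFun hv k.succ
      have h2 := congrFun hw k.succ
      have h3 := congrFun hsum k.succ
      rw [hθ, if_neg (Fin.succ_ne_zero k)] at h1 h2 h3
      simp only [Pi.add_apply] at h3
      omega
    simp only [Pi.add_apply]
    refine Fin.cases (by omega) (fun k => ?_) j
    refine Fin.cases (by simp only [Fin.succ_zero_eq_one]; omega) (fun l => ?_) k
    exact (hvw l).symm
end

section
/- A local Bass ring has at most two minimal primes: Let R be a Bass ring that is a local ring. Then R has at most two minimal prime ideals; that is, there exist prime ideals 𝔭 and 𝔮 of R such that every minimal prime ideal of R equals 𝔭 or 𝔮. -/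
section BassAux

open IsLocalRing

variable {R : Type*} [CommRing R]

private lemma bass_prod_zero [IsReduced R] {a b : R}
    (hab : ∀ q ∈ minimalPrimes R, a ∈ q ∨ b ∈ q) : a * b = 0 := by
  have h : a * b ∈ nilradical R := by
    rw [nilradical_eq_sInf]
    refine Submodule.mem_sInf.mpr fun P hP => ?_
    haveI : Ideal.IsPrime P := hP
    obtain ⟨q, hq, hqP⟩ := Ideal.exists_minimalPrimes_le (bot_le : ⊥ ≤ P)
    rcases hab q hq with h | h
    · exact hqP (q.mul_mem_right _ h)
    · exact hqP (q.mul_mem_left _ h)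
  rwa [nilradical_eq_zero R, Ideal.zero_eq_bot, Ideal.mem_bot] at h

private lemma bass_avoid [IsNoetherianRing R] {p : Ideal R} (hp : p ∈ minimalPrimes R) :
    ∃ x, x ∉ p ∧ ∀ q ∈ minimalPrimes R, q ≠ p → x ∈ q := by
  haveI hpp : p.IsPrime := hp.1.1
  classical
  have hfin := minimalPrimes.finite_of_isNoetherianRing R
  by_contra h
  push_neg at h
  have hle : (hfin.toFinset.erase p).inf id ≤ p := by
    intro w hw
    by_contra hwp
    obtain ⟨q, hq, hqp, hwq⟩ := h w hwp
    have hmem : q ∈ hfin.toFinset.erase p := by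
      rw [Finset.mem_erase]; exact ⟨hqp, hfin.mem_toFinset.mpr hq⟩
    have h2 : (hfin.toFinset.erase p).inf id ≤ q := Finset.inf_le hmem
    exact hwq (h2 hw)
  obtain ⟨q, hqS, hqle⟩ := (Ideal.IsPrime.inf_le' hpp).mp hle
  rw [Finset.mem_erase, hfin.mem_toFinset] at hqS
  exact hqS.1 (le_antisymm hqle (hp.2 ⟨hqS.2.1.1, bot_le⟩ hqle))

private lemma bass_mem_triple {x y z w : R} (hw : w ∈ Ideal.span ({x, y, z} : Set R)) :
    ∃ u1 u2 u3, u1*x + u2*y + u3*z = w := by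
  rw [show ({x,y,z} : Set R) = insert x {y,z} from rfl, Ideal.mem_span_insert] at hw
  obtain ⟨u1, w', hw', rfl⟩ := hw
  obtain ⟨u2, u3, h'⟩ := Ideal.mem_span_pair.mp hw'
  exact ⟨u1, u2, u3, by rw [add_assoc, h']⟩

private lemma bass_unit_sub [IsLocalRing R] {u m : R} (hu : IsUnit u)
    (hm : m ∈ maximalIdeal R) : IsUnit (u - m) := by
  by_contra h
  have h1 : u - m ∈ maximalIdeal R := (mem_maximalIdeal _).mpr (mem_nonunits_iff.mpr h)
  have h2 : u ∈ maximalIdeal R := by simpa using add_mem h1 hm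
  exact mem_nonunits_iff.mp ((mem_maximalIdeal u).mp h2) hu

private lemma bass_aux_sq {R : Type*} [CommRing R] [IsReduced R]
    (x y z c d c2 c3 d2 d3 : R) (hu : IsUnit (c - d))
    (hxy : x * y = 0) (hxz : x * z = 0)
    (heq : c*x + c2*y + c3*z = d*x + d2*y + d3*z) : x = 0 := by
  have h2 : (c - d) * (x * x) = 0 := by
    linear_combination x * heq + (d2 - c2) * hxy + (d3 - c3) * hxz
  obtain ⟨v, hv⟩ := hu.exists_left_inv
  have hx2 : x * x = 0 := by
    have h3 := congrArg (v * ·) h2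
    simp only [mul_zero] at h3
    calc x * x = v * (c - d) * (x * x) := by rw [hv, one_mul]
    _ = 0 := by rw [mul_assoc]; simpa using h3
  exact IsReduced.eq_zero x ⟨2, by rw [pow_two]; exact hx2⟩

private lemma bass_no_three [IsNoetherianRing R] [IsReduced R] [IsLocalRing R]
    (h2gen : ∀ I : Ideal R, ∃ a b : R, I = Ideal.span {a, b})
    {p1 p2 p3 : Ideal R} (h1 : p1 ∈ minimalPrimes R) (h2 : p2 ∈ minimalPrimes R)
    (h3 : p3 ∈ minimalPrimes R) (h12 : p1 ≠ p2) (h13 : p1 ≠ p3) (h23 : p2 ≠ p3) :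
    False := by
  classical
  obtain ⟨x, hx1, hx⟩ := bass_avoid h1
  obtain ⟨y, hy2, hy⟩ := bass_avoid h2
  obtain ⟨z, hz3, hz⟩ := bass_avoid h3
  have hxy : x * y = 0 := bass_prod_zero fun q hq => by
    by_cases h : q = p1
    · exact Or.inr (hy q hq (by rw [h]; exact h12.symm ∘ Eq.symm))
    · exact Or.inl (hx q hq h)
  have hxz : x * z = 0 := bass_prod_zero fun q hq => by
    by_cases h : q = p1
    · exact Or.inr (hz q hq (by rw [h]; exact h13.symm ∘ Eq.symm))
    · exact Or.inl (hx q hq h)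
  have hyz : y * z = 0 := bass_prod_zero fun q hq => by
    by_cases h : q = p2
    · exact Or.inr (hz q hq (by rw [h]; exact h23.symm ∘ Eq.symm))
    · exact Or.inl (hy q hq h)
  obtain ⟨a, b, hI⟩ := h2gen (Ideal.span ({x, y, z} : Set R))
  have hxm : x ∈ Ideal.span ({a, b} : Set R) := by
    rw [← hI]; exact Ideal.subset_span (by simp)
  have hym : y ∈ Ideal.span ({a, b} : Set R) := by
    rw [← hI]; exact Ideal.subset_span (by simp)
  have hzm : z ∈ Ideal.span ({a, b} : Set R) := by
    rw [← hI]; exact Ideal.subset_span (by simp)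
  obtain ⟨r1, s1, hr1⟩ := Ideal.mem_span_pair.mp hxm
  obtain ⟨r2, s2, hr2⟩ := Ideal.mem_span_pair.mp hym
  obtain ⟨r3, s3, hr3⟩ := Ideal.mem_span_pair.mp hzm
  have ham : a ∈ Ideal.span ({x, y, z} : Set R) := by
    rw [hI]; exact Ideal.subset_span (by simp)
  have hbm : b ∈ Ideal.span ({x, y, z} : Set R) := by
    rw [hI]; exact Ideal.subset_span (by simp)
  obtain ⟨u1, u2, u3, hu⟩ := bass_mem_triple ham
  obtain ⟨w1, w2, w3, hwb⟩ := bass_mem_triple hbm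
  -- residue field linear algebra
  let k := ResidueField R
  let v : Fin 3 → k × k :=
    ![(residue R r1, residue R s1), (residue R r2, residue R s2), (residue R r3, residue R s3)]
  have hnli : ¬ LinearIndependent k v := by
    intro hli
    have hcard := hli.fintype_card_le_finrank
    rw [Module.finrank_prod, Module.finrank_self] at hcard
    simp at hcard
  obtain ⟨g, hg0, i0, hgi⟩ := Fintype.not_linearIndependent_iff.mp hnli
  have hcex : ∀ i, ∃ cc : R, residue R cc = g i := fun i => residue_surjective (g i)
  choose c hc using hcex
  rw [Fin.sum_univ_three] at hg0
  have hA : c 0 * r1 + c 1 * r2 + c 2 * r3 ∈ maximalIdeal R := by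
    rw [← residue_eq_zero_iff]
    have h1 := congrArg Prod.fst hg0
    simp only [v, Prod.fst_add, Prod.smul_fst, Prod.fst_zero, smul_eq_mul,
      Matrix.cons_val_zero, Matrix.cons_val_one, Matrix.head_cons,
      Matrix.cons_val_two, Matrix.tail_cons] at h1
    simp only [map_add, map_mul, hc]
    exact h1
  have hB : c 0 * s1 + c 1 * s2 + c 2 * s3 ∈ maximalIdeal R := by
    rw [← residue_eq_zero_iff]
    have h1 := congrArg Prod.snd hg0
    simp only [v, Prod.snd_add, Prod.smul_snd, Prod.snd_zero, smul_eq_mul,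
      Matrix.cons_val_zero, Matrix.cons_val_one, Matrix.head_cons,
      Matrix.cons_val_two, Matrix.tail_cons] at h1
    simp only [map_add, map_mul, hc]
    exact h1
  have hd1 : (c 0 * r1 + c 1 * r2 + c 2 * r3) * u1 + (c 0 * s1 + c 1 * s2 + c 2 * s3) * w1
      ∈ maximalIdeal R := add_mem (Ideal.mul_mem_right _ _ hA) (Ideal.mul_mem_right _ _ hB)
  have hd2 : (c 0 * r1 + c 1 * r2 + c 2 * r3) * u2 + (c 0 * s1 + c 1 * s2 + c 2 * s3) * w2
      ∈ maximalIdeal R := add_mem (Ideal.mul_mem_right _ _ hA) (Ideal.mul_mem_right _ _ hB)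
  have hd3 : (c 0 * r1 + c 1 * r2 + c 2 * r3) * u3 + (c 0 * s1 + c 1 * s2 + c 2 * s3) * w3
      ∈ maximalIdeal R := add_mem (Ideal.mul_mem_right _ _ hA) (Ideal.mul_mem_right _ _ hB)
  have heq : c 0 * x + c 1 * y + c 2 * z =
      ((c 0 * r1 + c 1 * r2 + c 2 * r3) * u1 + (c 0 * s1 + c 1 * s2 + c 2 * s3) * w1) * x +
      ((c 0 * r1 + c 1 * r2 + c 2 * r3) * u2 + (c 0 * s1 + c 1 * s2 + c 2 * s3) * w2) * y +
      ((c 0 * r1 + c 1 * r2 + c 2 * r3) * u3 + (c 0 * s1 + c 1 * s2 + c 2 * s3) * w3) * z := by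
    linear_combination (-(c 0)) * hr1 + (-(c 1)) * hr2 + (-(c 2)) * hr3 +
      (-(c 0 * r1 + c 1 * r2 + c 2 * r3)) * hu + (-(c 0 * s1 + c 1 * s2 + c 2 * s3)) * hwb
  have hunit : IsUnit (c i0) := by
    by_contra hcu
    apply hgi
    rw [← hc i0, residue_eq_zero_iff]
    exact (mem_maximalIdeal _).mpr (mem_nonunits_iff.mpr hcu)
  fin_cases i0
  · have hx0 : x = 0 := bass_aux_sq x y z (c 0) _ (c 1) (c 2) _ _
      (bass_unit_sub hunit hd1) hxy hxz heq
    exact hx1 (hx0 ▸ p1.zero_mem)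
  · have heq' : c 1 * y + c 0 * x + c 2 * z =
        ((c 0 * r1 + c 1 * r2 + c 2 * r3) * u2 + (c 0 * s1 + c 1 * s2 + c 2 * s3) * w2) * y +
        ((c 0 * r1 + c 1 * r2 + c 2 * r3) * u1 + (c 0 * s1 + c 1 * s2 + c 2 * s3) * w1) * x +
        ((c 0 * r1 + c 1 * r2 + c 2 * r3) * u3 + (c 0 * s1 + c 1 * s2 + c 2 * s3) * w3) * z := by
      linear_combination heq
    have hy0 : y = 0 := bass_aux_sq y x z (c 1) _ (c 0) (c 2) _ _
      (bass_unit_sub hunit hd2) (by rw [mul_comm]; exact hxy) hyz heq'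
    exact hy2 (hy0 ▸ p2.zero_mem)
  · have heq' : c 2 * z + c 0 * x + c 1 * y =
        ((c 0 * r1 + c 1 * r2 + c 2 * r3) * u3 + (c 0 * s1 + c 1 * s2 + c 2 * s3) * w3) * z +
        ((c 0 * r1 + c 1 * r2 + c 2 * r3) * u1 + (c 0 * s1 + c 1 * s2 + c 2 * s3) * w1) * x +
        ((c 0 * r1 + c 1 * r2 + c 2 * r3) * u2 + (c 0 * s1 + c 1 * s2 + c 2 * s3) * w2) * y := by
      linear_combination heq
    have hz0 : z = 0 := bass_aux_sq z x y (c 2) _ (c 0) (c 1) _ _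
      (bass_unit_sub hunit hd3) (by rw [mul_comm]; exact hxz) (by rw [mul_comm]; exact hyz) heq'
    exact hz3 (hz0 ▸ p3.zero_mem)


end BassAux

set_option synthInstance.maxHeartbeats 400000 in
/-- **A local Bass ring has at most two minimal primes**: if `R` is a commutative
noetherian reduced local ring whose integral closure in its total quotient ring is
module-finite and all of whose ideals are `2`-generated, then there are prime ideals
`𝔭, 𝔮` such that every minimal prime ideal of `R` equals `𝔭` or `𝔮`. -/
theorem local_bass_ring_two_minimal_primes (R : Type*) [CommRing R]
    [IsNoetherianRing R] [IsReduced R] [IsLocalRing R]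
    (hic : Module.Finite R (integralClosure R (FractionRing R)))
    (h2gen : ∀ I : Ideal R, ∃ a b : R, I = Ideal.span {a, b}) :
    ∃ p q : Ideal R, p.IsPrime ∧ q.IsPrime ∧
      ∀ I ∈ minimalPrimes R, I = p ∨ I = q := by
  haveI : (IsLocalRing.maximalIdeal R).IsPrime :=
    (IsLocalRing.maximalIdeal.isMaximal R).isPrime
  obtain ⟨p, hp, -⟩ :=
    Ideal.exists_minimalPrimes_le (bot_le : ⊥ ≤ IsLocalRing.maximalIdeal R)
  have hp' : p ∈ minimalPrimes R := hp
  by_cases hone : ∀ I ∈ minimalPrimes R, I = p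
  · exact ⟨p, IsLocalRing.maximalIdeal R, hp'.1.1, inferInstance,
      fun I hI => Or.inl (hone I hI)⟩
  · push_neg at hone
    obtain ⟨q, hq, hqp⟩ := hone
    refine ⟨p, q, hp'.1.1, hq.1.1, fun I hI => ?_⟩
    by_contra hboth
    push_neg at hboth
    exact bass_no_three h2gen hI hp' hq hboth.1 hboth.2 (Ne.symm hqp)
end
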